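/- arXiv:math/0105065 — 8 statements merged into one kernel-verified Lean document; each statement's English description precedes it below -/
import Mathlib

section
/- Let A be a finite linearly ordered alphabet, and let α ∈ S_k and β ∈ S_l. Then in the free associative algebra ℚ⟨A⟩ one has F_α(A) · F_β(A) = Σ_{σ ∈ α ⧢ β[k]} F_σ(A). In particular, the ℚ-linear span of the free quasi-ribbons is closed under multiplication. -/
open scoped Classical

noncomputable section

/-- `IsStd w σ` says that `σ` is the standardization of the word `w` (viewed as a
function `Fin n → A`): for positions `i < j`, `σ i < σ j` iff `w i ≤ w j`. -/
def IsStd {A : Type*} [LinearOrder A] {n : ℕ} (w : Fin n → A) (σ : Equiv.Perm (Fin n)) : Prop :=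
  ∀ i j : Fin n, i < j → (σ i < σ j ↔ w i ≤ w j)

theorem exists_isStd {A : Type*} [LinearOrder A] {n : ℕ} (w : Fin n → A) :
    ∃ σ : Equiv.Perm (Fin n), IsStd w σ := by
  refine ⟨(Tuple.sort w)⁻¹, ?_⟩
  have hmono : Monotone (w ∘ (Tuple.sort w)) := Tuple.monotone_sort w
  have hstab : ∀ i j, i < j → w (Tuple.sort w i) = w (Tuple.sort w j) →
      Tuple.sort w i < Tuple.sort w j :=
    (Tuple.eq_sort_iff.1 rfl).2
  intro i j hij
  constructor
  · intro h
    have := hmono h.le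
    simpa using this
  · intro hw
    rcases lt_trichotomy ((Tuple.sort w)⁻¹ i) ((Tuple.sort w)⁻¹ j) with h | h | h
    · exact h
    · exact absurd (congrArg (Tuple.sort w) h) (by simp [hij.ne])
    · exfalso
      have h1 : w j ≤ w i := by simpa using hmono h.le
      have h2 : w j = w i := le_antisymm h1 hw
      have := hstab _ _ h (by simpa using h2)
      simp at this
      exact absurd this (not_lt.2 hij.le)

/-- The standardization of a word, defined via unique choice from `IsStd`. -/
def std {A : Type*} [LinearOrder A] {n : ℕ} (w : Fin n → A) : Equiv.Perm (Fin n) :=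
  Classical.choose (exists_isStd w)

/-- A word `w : Fin n → A`, viewed as a monomial (element of the free monoid) inside the
free associative algebra `ℚ⟨A⟩ = MonoidAlgebra ℚ (FreeMonoid A)`. -/
def wordAlg {A : Type*} {n : ℕ} (w : Fin n → A) : MonoidAlgebra ℚ (FreeMonoid A) :=
  MonoidAlgebra.of ℚ (FreeMonoid A) (FreeMonoid.ofList (List.ofFn w))

/-- The free quasi-ribbon `F_σ(A) = Σ_{w : Std(w) = σ⁻¹} w ∈ ℚ⟨A⟩`. -/
def FQR (A : Type*) [LinearOrder A] [Fintype A] {n : ℕ} (σ : Equiv.Perm (Fin n)) :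
    MonoidAlgebra ℚ (FreeMonoid A) :=
  ∑ w ∈ Finset.univ.filter (fun w : Fin n → A => std w = σ⁻¹), wordAlg w

/-- The shifted shuffle `α ⧢ β[k]`: the set of `σ ∈ S_{k+l}` such that the subword of the
one-line word of `σ` (0-based values) formed by the letters `< k` is the one-line word of `α`,
and the subword formed by the letters `≥ k` is the one-line word of `β` shifted by `k`. -/
def shiftedShuffle {k l : ℕ} (α : Equiv.Perm (Fin k)) (β : Equiv.Perm (Fin l)) :
    Finset (Equiv.Perm (Fin (k + l))) :=
  Finset.univ.filter (fun σ =>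
    ((List.ofFn fun i : Fin (k + l) => (σ i : ℕ)).filter fun x => x < k)
        = (List.ofFn fun i : Fin k => (α i : ℕ)) ∧
    ((List.ofFn fun i : Fin (k + l) => (σ i : ℕ)).filter fun x => k ≤ x)
        = (List.ofFn fun i : Fin l => (β i : ℕ) + k))

/-! Both sides are sums of the words `w = uv` with `|u| = k`, `Std(u) = α⁻¹`, `Std(v) = β⁻¹`.
For the right-hand side, put `σ = Std(w)⁻¹`: the letters `< k` of the one-line word of `σ` are
the positions of `u`, listed in increasing order of `Std(w)`. Since `Std(w)` orders the positions
of `u` as `Std(u)` does, this subword is the one-line word of `α` iff `Std(u) = α⁻¹`; likewise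
for `v` and `β`. -/

open Function

section Order

variable {ι β γ : Type*} [LinearOrder ι]

theorem lt_iff_lt_of_forall_lt [LinearOrder β] [LinearOrder γ] {f : ι → β} {g : ι → γ}
    (hf : Injective f) (hg : Injective g) (h : ∀ i j, i < j → (f i < f j ↔ g i < g j))
    (i j : ι) : f i < f j ↔ g i < g j := by
  rcases lt_trichotomy i j with hij | rfl | hij
  · exact h i j hij
  · simp
  · rw [lt_iff_not_ge, lt_iff_not_ge, (hf.ne hij.ne).le_iff_lt, (hg.ne hij.ne).le_iff_lt,
      h j i hij]

theorem strictMono_comp_perm_iff [LinearOrder β] {f : ι → β} (hf : Injective f)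
    (α : Equiv.Perm ι) :
    StrictMono (f ∘ α) ↔ ∀ i j, i < j → (α⁻¹ i < α⁻¹ j ↔ f i < f j) := by
  refine ⟨fun hs i j _ => by simpa using (hs.lt_iff_lt (a := α⁻¹ i) (b := α⁻¹ j)).symm,
    fun h a b hab => ?_⟩
  simpa using (lt_iff_lt_of_forall_lt (Equiv.injective _) hf h (α a) (α b)).1 (by simpa)

end Order

section Standardization

variable {A : Type*} [LinearOrder A] {n m : ℕ} {w : Fin n → A}

theorem IsStd.unique {σ τ : Equiv.Perm (Fin n)} (hσ : IsStd w σ) (hτ : IsStd w τ) :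
    σ = τ := by
  have hmono : StrictMono (σ ∘ ⇑τ⁻¹) :=
    (strictMono_comp_perm_iff σ.injective τ⁻¹).2 fun i j hij => by
      rw [inv_inv, hσ i j hij, hτ i j hij]
  exact Equiv.ext fun x => by simpa using congrFun hmono.eq_id (τ x)

theorem isStd_std : IsStd w (std w) :=
  Classical.choose_spec (exists_isStd w)

theorem std_eq_iff {σ : Equiv.Perm (Fin n)} : std w = σ ↔ IsStd w σ :=
  ⟨fun h => h ▸ isStd_std, isStd_std.unique⟩

theorem IsStd.isStd_comp_iff {τ : Equiv.Perm (Fin n)} (hτ : IsStd w τ) {e : Fin m → Fin n}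
    (he : StrictMono e) (ρ : Equiv.Perm (Fin m)) :
    IsStd (w ∘ e) ρ ↔ ∀ i j, i < j → (ρ i < ρ j ↔ τ (e i) < τ (e j)) :=
  forall₃_congr fun i j hij => by rw [hτ _ _ (he hij), comp_apply, comp_apply]

theorem std_comp_eq_inv_iff {e : Fin m → Fin n} (he : StrictMono e) (α : Equiv.Perm (Fin m)) :
    std (w ∘ e) = α⁻¹ ↔ StrictMono (std w ∘ e ∘ α) := by
  rw [std_eq_iff, isStd_std.isStd_comp_iff he]
  exact (strictMono_comp_perm_iff ((std w).injective.comp he.injective) α).symm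

end Standardization

section ShiftedShuffle

theorem List.filter_finRange_eq_ofFn_iff {N m : ℕ} (p : Fin N → Bool) (u : Fin m → Fin N)
    (hu : ∀ x, p x ↔ x ∈ Set.range u) :
    (List.finRange N).filter p = List.ofFn u ↔ StrictMono u := by
  have hsorted : ((List.finRange N).filter p).Pairwise (· < ·) :=
    (List.pairwise_lt_finRange N).filter p
  refine ⟨fun h => List.pairwise_ofFn.1 (h ▸ hsorted), fun hmono => ?_⟩
  refine hsorted.eq_of_mem_iff (List.pairwise_ofFn.2 fun i j hij => hmono hij) fun x => ?_
  simp [hu]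

theorem List.filter_ofFn_eq_ofFn_comp_iff {β : Type*} {N m : ℕ} {f : Fin N → β}
    (hf : Injective f) (p : β → Bool) (u : Fin m → Fin N)
    (hu : ∀ x, p (f x) ↔ x ∈ Set.range u) :
    (List.ofFn f).filter p = List.ofFn (f ∘ u) ↔ StrictMono u := by
  rw [List.ofFn_eq_map, List.filter_map, ← List.map_ofFn, List.map_inj_right fun _ _ h => hf h,
    List.filter_finRange_eq_ofFn_iff (p ∘ f) u hu]

variable {k l : ℕ} (α : Equiv.Perm (Fin k)) (β : Equiv.Perm (Fin l))

theorem mem_shiftedShuffle_iff_s0 (σ : Equiv.Perm (Fin (k + l))) :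
    σ ∈ shiftedShuffle α β ↔
      StrictMono (⇑σ⁻¹ ∘ Fin.castAdd l ∘ α) ∧ StrictMono (⇑σ⁻¹ ∘ Fin.natAdd k ∘ β) := by
  have hval : Injective fun i : Fin (k + l) => (σ i : ℕ) :=
    Fin.val_injective.comp σ.injective
  have hrange {m : ℕ} (g : Fin m → Fin (k + l)) (γ : Equiv.Perm (Fin m)) (x : Fin (k + l)) :
      x ∈ Set.range (⇑σ⁻¹ ∘ g ∘ γ) ↔ σ x ∈ Set.range g := by
    simp [Set.range_comp, Equiv.Perm.inv_def]
  have hleft := List.filter_ofFn_eq_ofFn_comp_iff hval (fun x => decide (x < k))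
    (⇑σ⁻¹ ∘ Fin.castAdd l ∘ α) fun x => by
      rw [hrange, decide_eq_true_iff]
      exact ⟨fun h => ⟨⟨_, h⟩, rfl⟩, by rintro ⟨i, hi⟩; exact hi ▸ Fin.castAdd_lt l i⟩
  have hright := List.filter_ofFn_eq_ofFn_comp_iff hval (fun x => decide (k ≤ x))
    (⇑σ⁻¹ ∘ Fin.natAdd k ∘ β) fun x => by
      rw [hrange, Fin.range_natAdd, decide_eq_true_iff]
      rfl
  simp only [shiftedShuffle, Finset.mem_filter, Finset.mem_univ, true_and, ← hleft, ← hright]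
  congr! 3 <;> funext i <;> simp [add_comm]

theorem inv_std_mem_shiftedShuffle_iff {A : Type*} [LinearOrder A] (w : Fin (k + l) → A) :
    (std w)⁻¹ ∈ shiftedShuffle α β ↔
      std (w ∘ Fin.castAdd l) = α⁻¹ ∧ std (w ∘ Fin.natAdd k) = β⁻¹ := by
  rw [mem_shiftedShuffle_iff_s0, inv_inv, std_comp_eq_inv_iff (Fin.strictMono_castAdd l),
    std_comp_eq_inv_iff (Fin.strictMono_natAdd k)]

end ShiftedShuffle

theorem wordAlg_mul {A : Type*} {k l : ℕ} (u : Fin k → A) (v : Fin l → A) :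
    wordAlg u * wordAlg v = wordAlg (Fin.append u v) := by
  rw [wordAlg, wordAlg, wordAlg, ← map_mul, ← FreeMonoid.ofList_append, List.ofFn_fin_append]

section FreeQuasiRibbon

variable {A : Type*} [LinearOrder A] [Fintype A]

theorem sum_FQR {n : ℕ} (S : Finset (Equiv.Perm (Fin n))) :
    ∑ σ ∈ S, FQR A σ = ∑ w : Fin n → A with (std w)⁻¹ ∈ S, wordAlg w := by
  rw [← Finset.sum_fiberwise_of_maps_to (g := fun w => (std w)⁻¹)
    fun w hw => (Finset.mem_filter.1 hw).2]
  refine Finset.sum_congr rfl fun σ hσ => ?_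
  rw [FQR, Finset.filter_filter]
  refine Finset.sum_congr (Finset.filter_congr fun w _ => ?_) fun _ _ => rfl
  rw [← inv_eq_iff_eq_inv]
  exact ⟨fun h => ⟨h ▸ hσ, h⟩, And.right⟩

theorem FQR_mul {k l : ℕ} (α : Equiv.Perm (Fin k)) (β : Equiv.Perm (Fin l)) :
    FQR A α * FQR A β = ∑ σ ∈ shiftedShuffle α β, FQR A σ := by
  rw [sum_FQR, FQR, FQR, Finset.sum_mul_sum, ← Finset.sum_product']
  refine Finset.sum_equiv (Fin.appendEquiv k l) (fun p => ?_) fun p _ => wordAlg_mul p.1 p.2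
  simp [inv_std_mem_shiftedShuffle_iff, comp_def]

end FreeQuasiRibbon

theorem Submodule.mul_mem_span_of_forall_mul_mem {R B : Type*} [CommSemiring R] [Semiring B]
    [Algebra R B] {s : Set B} (hs : ∀ a ∈ s, ∀ b ∈ s, a * b ∈ span R s) {x y : B}
    (hx : x ∈ span R s) (hy : y ∈ span R s) : x * y ∈ span R s := by
  have hxy := Submodule.mul_mem_mul hx hy
  rw [Submodule.span_mul_span] at hxy
  refine Submodule.span_le.2 ?_ hxy
  rintro _ ⟨a, ha, b, hb, rfl⟩
  exact hs a ha b hb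

/-- For a finite linearly ordered alphabet `A`, `α ∈ S_k`, `β ∈ S_l`, one has
`F_α(A) · F_β(A) = Σ_{σ ∈ α ⧢ β[k]} F_σ(A)` in `ℚ⟨A⟩`; in particular, the linear span of the
free quasi-ribbons is closed under multiplication. -/
theorem freeQuasiRibbon_mul (A : Type*) [LinearOrder A] [Fintype A] :
    (∀ {k l : ℕ} (α : Equiv.Perm (Fin k)) (β : Equiv.Perm (Fin l)),
      FQR A α * FQR A β = ∑ σ ∈ shiftedShuffle α β, FQR A σ) ∧
    (∀ x y : MonoidAlgebra ℚ (FreeMonoid A),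
      x ∈ Submodule.span ℚ {z | ∃ (n : ℕ) (σ : Equiv.Perm (Fin n)), z = FQR A σ} →
      y ∈ Submodule.span ℚ {z | ∃ (n : ℕ) (σ : Equiv.Perm (Fin n)), z = FQR A σ} →
      x * y ∈ Submodule.span ℚ {z | ∃ (n : ℕ) (σ : Equiv.Perm (Fin n)), z = FQR A σ}) := by
  refine ⟨FQR_mul, fun x y => Submodule.mul_mem_span_of_forall_mul_mem ?_⟩
  rintro _ ⟨n, σ, rfl⟩ _ ⟨m, τ, rfl⟩
  rw [FQR_mul]
  exact Submodule.sum_mem _ fun ρ _ => Submodule.subset_span ⟨n + m, ρ, rfl⟩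

end
end

section
/- Let α ∈ S_k, β ∈ S_l and γ ∈ S_{k+l}. Then γ ∈ α ⧢ β[k] if and only if the standardization of the word (γ⁻¹)(1)⋯(γ⁻¹)(k) equals α⁻¹ and the standardization of the word (γ⁻¹)(k+1)⋯(γ⁻¹)(k+l) equals β⁻¹. (This identity of structure constants expresses that the bialgebra FQSym is self-dual: ⟨F ⊗ G, ΔH⟩ = ⟨FG, H⟩ for the pairing ⟨F_σ, F_τ⟩ = δ_{σ⁻¹,τ}.) -/
open scoped Classical

noncomputable section

/-!
The letters of `γ` lying in the image of an order embedding `e : Fin m ↪o Fin n` stand at the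
positions `γ⁻¹ (e 0), …, γ⁻¹ (e (m - 1))`, and the subword they form lists them in the order of
these positions. Hence that subword is the word of `e ∘ δ` exactly when `γ⁻¹ ∘ e ∘ δ` is strictly
increasing, i.e. when `δ⁻¹` standardizes the injective word `γ⁻¹ ∘ e`. The letters `< k` and `≥ k`
are the images of `Fin.castAdd` and `Fin.natAdd`.
-/

theorem isStd_iff_strictMono {A : Type*} [LinearOrder A] {n : ℕ} {w : Fin n → A}
    (hw : Function.Injective w) (σ : Equiv.Perm (Fin n)) :
    IsStd w σ ↔ StrictMono (w ∘ ⇑σ⁻¹) := by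
  constructor
  · intro hstd a b hab
    have hne : σ⁻¹ a ≠ σ⁻¹ b := σ⁻¹.injective.ne hab.ne
    rcases hne.lt_or_gt with hlt | hgt
    · have := (hstd _ _ hlt).mp (by simpa using hab)
      exact this.lt_of_ne (hw.ne hlt.ne)
    · have := (hstd _ _ hgt).not.mp (by simpa using hab.not_gt)
      exact not_le.mp this
  · intro hmono i j hij
    have hσ := hmono.lt_iff_lt (a := σ i) (b := σ j)
    simp only [Function.comp_apply, Equiv.Perm.coe_inv, Equiv.symm_apply_apply] at hσ
    rw [← hσ, (hw.ne hij.ne).le_iff_lt]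

theorem List.filter_finRange_eq_iff_sortedLT {n : ℕ} {q : Fin n → Bool} {L : List (Fin n)}
    (hL : ∀ x, x ∈ L ↔ q x) : (List.finRange n).filter q = L ↔ L.SortedLT := by
  refine ⟨?_, fun hsorted => ?_⟩
  · rintro rfl
    exact ((List.sortedLT_finRange n).pairwise.filter q).sortedLT
  · refine ((List.sortedLT_finRange n).pairwise.filter q).sortedLT.eq_of_mem_iff hsorted ?_
    simp [hL]

theorem filter_ofFn_eq_ofFn_iff_isStd {n m : ℕ} (e : Fin m ↪o Fin n) (p : ℕ → Prop)
    [DecidablePred p] (hp : ∀ x : Fin n, p x ↔ x ∈ Set.range e)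
    (γ : Equiv.Perm (Fin n)) (δ : Equiv.Perm (Fin m)) :
    ((List.ofFn fun i : Fin n => (γ i : ℕ)).filter fun x => p x)
        = List.ofFn (fun i : Fin m => (e (δ i) : ℕ)) ↔
      IsStd (fun i : Fin m => γ⁻¹ (e i)) δ⁻¹ := by
  have hword : Function.Injective fun i => γ⁻¹ (e i) := γ⁻¹.injective.comp e.injective
  have hval : Function.Injective fun x => (γ x : ℕ) := Fin.val_injective.comp γ.injective
  have hrhs : List.ofFn (fun i : Fin m => (e (δ i) : ℕ))
      = (List.ofFn fun i => γ⁻¹ (e (δ i))).map fun x => (γ x : ℕ) := by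
    simp [List.map_ofFn, Function.comp_def]
  rw [isStd_iff_strictMono hword, inv_inv, ← List.sortedLT_ofFn_iff,
    List.ofFn_eq_map (f := fun i => (γ i : ℕ)), hrhs, List.filter_map,
    List.map_inj_right fun _ _ h => hval h]
  apply List.filter_finRange_eq_iff_sortedLT
  intro x
  rw [List.mem_ofFn, ← δ.surjective.exists (p := fun j => γ⁻¹ (e j) = x), Function.comp_apply,
    decide_eq_true_iff, hp]
  simp only [Equiv.Perm.inv_eq_iff_eq, Set.mem_range]

/-- `γ ∈ α ⧢ β[k]` iff the standardization of the word
`γ⁻¹(1)⋯γ⁻¹(k)` is `α⁻¹` and the standardization of `γ⁻¹(k+1)⋯γ⁻¹(k+l)` is `β⁻¹`. -/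
theorem mem_shiftedShuffle_iff {k l : ℕ} (α : Equiv.Perm (Fin k)) (β : Equiv.Perm (Fin l))
    (γ : Equiv.Perm (Fin (k + l))) :
    γ ∈ shiftedShuffle α β ↔
      (IsStd (fun i : Fin k => γ⁻¹ ⟨(i : ℕ), by omega⟩) α⁻¹ ∧
       IsStd (fun i : Fin l => γ⁻¹ ⟨k + (i : ℕ), by omega⟩) β⁻¹) := by
  rw [shiftedShuffle, Finset.mem_filter, and_iff_right (Finset.mem_univ γ)]
  refine and_congr ?_ ?_
  · exact filter_ofFn_eq_ofFn_iff_isStd (Fin.castAddOrderEmb l) (· < k)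
      (fun x => (Set.ext_iff.mp (Fin.range_castLE (Nat.le_add_right k l)) x).symm) γ α
  · refine Iff.trans ?_ (filter_ofFn_eq_ofFn_iff_isStd (Fin.natAddOrderEmb k) (k ≤ ·)
      (fun x => (Set.ext_iff.mp (Fin.range_natAdd k l) x).symm) γ β)
    simp only [Fin.natAddOrderEmb_apply, Fin.val_natAdd, Nat.add_comm]

end
end

section
/- Let σ ∈ Sₙ have its (unique) maximal factorization σ = σ₁ • ⋯ • σ_r into connected permutations σᵢ ∈ S_{kᵢ}, and identify permutations with their one-line words. Consider the iterated shifted q-shuffle F^σ := (⋯((σ₁ ⧢_q σ₂[k₁]) ⧢_q σ₃[k₁+k₂]) ⋯) ⧢_q σ_r[k₁+⋯+k_{r−1}], where τ[m] denotes the word obtained from τ by adding m to every letter, and write F^σ = Σ_{τ ∈ Sₙ} c_τ(q)·τ with c_τ(q) ∈ ℚ[q]. Then c_σ(q) = 1, and for every τ ≠ σ the polynomial c_τ(q) has zero constant term and c_τ = 0 unless the one-line word of σ is lexicographically smaller than that of τ. (Hence the transition matrix between the families (F^σ) and (F_σ) is unitriangular and invertible over ℚ[q], so the algebras FQSym_q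 for different q are pairwise isomorphic.) -/
noncomputable section

/-- A permutation of unspecified size. -/
def SigmaPerm : Type := Σ n : ℕ, Equiv.Perm (Fin n)

/-- Shifted concatenation of permutations: the one-line word of `sconcat ⟨k, α⟩ ⟨l, β⟩` is
`α(1)⋯α(k) (β(1)+k)⋯(β(l)+k)`. -/
def sconcat (p q : SigmaPerm) : SigmaPerm :=
  ⟨p.1 + q.1, finSumFinEquiv.permCongr (p.2.sumCongr q.2)⟩

/-- Iterated shifted concatenation of a list of permutations. -/
def sconcatList (L : List SigmaPerm) : SigmaPerm :=
  L.foldr sconcat ⟨0, 1⟩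

/-- Connectedness of a permutation. -/
def IsConnectedPerm (p : SigmaPerm) : Prop :=
  0 < p.1 ∧ ∀ k : ℕ, 0 < k → k < p.1 → ∃ i : Fin p.1, (i : ℕ) < k ∧ k ≤ ((p.2 i : Fin p.1) : ℕ)

/-- The `q`-shuffle product of two words, with values in `ℚ[q]`-linear combinations of words:
`u ⧢_q ε = u`, `ε ⧢_q v = v`, and
`(au) ⧢_q (bv) = a(u ⧢_q bv) + q^{|au|} b(au ⧢_q v)`. -/
def qshuffle {α : Type*} : List α → List α → (List α →₀ Polynomial ℚ)
  | [], v => Finsupp.single v 1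
  | u, [] => Finsupp.single u 1
  | a :: u, b :: v =>
      Finsupp.mapDomain (List.cons a) (qshuffle u (b :: v)) +
        (Polynomial.X : Polynomial ℚ) ^ (u.length + 1) •
          Finsupp.mapDomain (List.cons b) (qshuffle (a :: u) v)
  termination_by u v => u.length + v.length
  decreasing_by all_goals simp

/-- `q`-shuffle of a linear combination of words with a word (extension by linearity). -/
def qshuffleL {α : Type*} (f : List α →₀ Polynomial ℚ) (v : List α) :
    List α →₀ Polynomial ℚ :=
  f.sum fun u c => c • qshuffle u v

/-- One-line word of a permutation (with 0-based letters). -/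
def oneLine {n : ℕ} (σ : Equiv.Perm (Fin n)) : List ℕ :=
  List.ofFn fun i => (σ i : ℕ)

/-- Iterated shifted `q`-shuffle: `Fiter f m L` successively `q`-shuffles `f` with the one-line
words of the permutations in `L`, each shifted by the accumulated sizes (starting from `m`). -/
def Fiter : (List ℕ →₀ Polynomial ℚ) → ℕ → List SigmaPerm → (List ℕ →₀ Polynomial ℚ)
  | f, _, [] => f
  | f, m, p :: L => Fiter (qshuffleL f ((oneLine p.2).map (· + m))) (m + p.1) L

/-!
In `u ⧢_q v` the word `u ++ v` arises from a single path of the recursion, the one that never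
moves a letter of `v` in front of a letter of `u`, and it carries weight `1`; every other path
pays a factor `q^{|au|}` and, when all letters of `v` exceed those of `u`, ends in a
lexicographically larger word. Hence if `f` is a word `s` plus `q`-divisible multiples of larger
rearrangements of `s`, then `f ⧢_q v` has the same shape with leading word `s ++ v`: for words of
equal length, `s < u` forces `s ++ v < u ++ v`. The shifted factors of `σ` have successively
larger letters, so induction along the factorization makes `σ` the leading word of `F^σ`.
-/

open Polynomial

section Words

variable {α : Type*}

theorem ne_zero_or_ne_zero_of_add_ne_zero {M : Type*} [AddZeroClass M] {a b : M} (h : a + b ≠ 0) :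
    a ≠ 0 ∨ b ≠ 0 := by
  contrapose! h
  rw [h.1, h.2, add_zero]

theorem Finsupp.exists_eq_cons_of_mapDomain_cons_ne_zero {M : Type*} [AddCommMonoid M]
    {g : List α →₀ M} {a : α} {w : List α} (h : Finsupp.mapDomain (List.cons a) g w ≠ 0) :
    ∃ w', w = a :: w' ∧ g w' ≠ 0 := by
  classical
  obtain ⟨w', hw', rfl⟩ :=
    Finset.mem_image.mp (Finsupp.mapDomain_support (Finsupp.mem_support_iff.mpr h))
  exact ⟨w', rfl, Finsupp.mem_support_iff.mp hw'⟩

theorem qshuffle_nil_right (u : List α) : qshuffle u [] = Finsupp.single u 1 := by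
  cases u with
  | nil => exact qshuffle.eq_1 []
  | cons a u => exact qshuffle.eq_2 _ (List.cons_ne_nil a u)

theorem List.Perm.of_qshuffle_ne_zero {u v w : List α} (h : qshuffle u v w ≠ 0) :
    w.Perm (u ++ v) := by
  induction u, v using qshuffle.induct generalizing w with
  | case1 v =>
    rw [qshuffle.eq_1] at h
    rw [(Finsupp.single_apply_ne_zero.mp h).1, List.nil_append]
  | case2 u _ =>
    rw [qshuffle_nil_right] at h
    rw [(Finsupp.single_apply_ne_zero.mp h).1, List.append_nil]
  | case3 a u b v ih₁ ih₂ =>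
    rw [qshuffle.eq_3, Finsupp.add_apply] at h
    rcases ne_zero_or_ne_zero_of_add_ne_zero h with h₁ | h₂
    · obtain ⟨w', rfl, hw'⟩ := Finsupp.exists_eq_cons_of_mapDomain_cons_ne_zero h₁
      exact (ih₁ hw').cons a
    · obtain ⟨w', rfl, hw'⟩ :=
        Finsupp.exists_eq_cons_of_mapDomain_cons_ne_zero (right_ne_zero_of_smul h₂)
      exact ((ih₂ hw').cons b).trans List.perm_middle.symm

theorem coeff_zero_qshuffle_of_ne {u v w : List α} (hw : w ≠ u ++ v) :
    (qshuffle u v w).coeff 0 = 0 := by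
  induction u, v using qshuffle.induct generalizing w with
  | case1 v => rw [qshuffle.eq_1, Finsupp.single_eq_of_ne' (by simpa using hw.symm), coeff_zero]
  | case2 u _ => rw [qshuffle_nil_right, Finsupp.single_eq_of_ne' (by simpa using hw.symm),
      coeff_zero]
  | case3 a u b v ih₁ _ =>
    have hmove : (((X : ℚ[X]) ^ (u.length + 1) •
        Finsupp.mapDomain (List.cons b) (qshuffle (a :: u) v)) w).coeff 0 = 0 := by
      rw [Finsupp.smul_apply, smul_eq_mul, mul_coeff_zero, coeff_X_pow, if_neg (by omega),
        zero_mul]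
    rw [qshuffle.eq_3, Finsupp.add_apply, coeff_add, hmove, add_zero]
    by_contra h
    obtain ⟨w', rfl, -⟩ := Finsupp.exists_eq_cons_of_mapDomain_cons_ne_zero
      (fun h0 => h (by rw [h0, coeff_zero]))
    rw [Finsupp.mapDomain_apply List.cons_injective, ih₁ (by simpa using hw)] at h
    exact h rfl

theorem qshuffleL_apply (f : List α →₀ ℚ[X]) (v w : List α) :
    qshuffleL f v w = ∑ u ∈ f.support, f u * qshuffle u v w := by
  simp only [qshuffleL, Finsupp.sum, Finsupp.finsetSum_apply, Finsupp.smul_apply, smul_eq_mul]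

theorem exists_qshuffle_ne_zero_of_qshuffleL_ne_zero {f : List α →₀ ℚ[X]} {v w : List α}
    (h : qshuffleL f v w ≠ 0) : ∃ u, f u ≠ 0 ∧ qshuffle u v w ≠ 0 := by
  rw [qshuffleL_apply] at h
  obtain ⟨u, hu, hterm⟩ := Finset.exists_ne_zero_of_sum_ne_zero h
  exact ⟨u, Finsupp.mem_support_iff.mp hu, right_ne_zero_of_mul hterm⟩

variable [LinearOrder α]

theorem qshuffle_apply_append {u v : List α} (huv : ∀ x ∈ u, ∀ y ∈ v, x < y) :
    qshuffle u v (u ++ v) = 1 := by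
  induction u, v using qshuffle.induct with
  | case1 v => simp [qshuffle.eq_1]
  | case2 u _ => simp [qshuffle_nil_right]
  | case3 a u b v ih₁ _ =>
    have hab : a < b := huv a List.mem_cons_self b List.mem_cons_self
    have hmove : Finsupp.mapDomain (List.cons b) (qshuffle (a :: u) v) (a :: (u ++ b :: v)) = 0 :=
      by_contra fun h => hab.ne
        (List.cons.inj (Finsupp.exists_eq_cons_of_mapDomain_cons_ne_zero h).choose_spec.1).1
    rw [qshuffle.eq_3, Finsupp.add_apply, List.cons_append,
      Finsupp.mapDomain_apply List.cons_injective, Finsupp.smul_apply, hmove, smul_zero, add_zero]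
    exact ih₁ fun x hx y hy => huv x (List.mem_cons_of_mem a hx) y hy

theorem append_le_of_qshuffle_ne_zero {u v w : List α} (huv : ∀ x ∈ u, ∀ y ∈ v, x < y)
    (h : qshuffle u v w ≠ 0) : u ++ v ≤ w := by
  induction u, v using qshuffle.induct generalizing w with
  | case1 v =>
    rw [qshuffle.eq_1] at h
    exact (Finsupp.single_apply_ne_zero.mp h).1 ▸ le_rfl
  | case2 u _ =>
    rw [qshuffle_nil_right] at h
    rw [(Finsupp.single_apply_ne_zero.mp h).1, List.append_nil]
  | case3 a u b v ih₁ _ =>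
    have hab : a < b := huv a List.mem_cons_self b List.mem_cons_self
    rw [qshuffle.eq_3, Finsupp.add_apply] at h
    rcases ne_zero_or_ne_zero_of_add_ne_zero h with h₁ | h₂
    · obtain ⟨w', rfl, hw'⟩ := Finsupp.exists_eq_cons_of_mapDomain_cons_ne_zero h₁
      exact List.cons_le_cons a (ih₁ (fun x hx y hy => huv x (List.mem_cons_of_mem a hx) y hy) hw')
    · obtain ⟨w', rfl, -⟩ :=
        Finsupp.exists_eq_cons_of_mapDomain_cons_ne_zero (right_ne_zero_of_smul h₂)
      exact le_of_lt (List.Lex.rel hab)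

theorem List.append_lt_append_of_lt_of_length_eq {s u : List α} (h : s < u)
    (hlen : s.length = u.length) (v v' : List α) : s ++ v < u ++ v' := by
  induction h with
  | nil => simp at hlen
  | rel hab => exact List.Lex.rel hab
  | cons _ ih => exact List.Lex.cons (ih (by simpa using hlen))

structure IsUnitriangularAt (f : List α →₀ ℚ[X]) (s : List α) : Prop where
  apply_self : f s = 1
  coeff_zero_of_ne : ∀ w ≠ s, (f w).coeff 0 = 0
  le_of_ne_zero : ∀ w, f w ≠ 0 → s ≤ w
  perm_of_ne_zero : ∀ w, f w ≠ 0 → w.Perm s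

theorem isUnitriangularAt_single (s : List α) : IsUnitriangularAt (Finsupp.single s 1) s where
  apply_self := Finsupp.single_eq_same
  coeff_zero_of_ne w hw := by rw [Finsupp.single_eq_of_ne' hw.symm, coeff_zero]
  le_of_ne_zero w hw := (Finsupp.single_apply_ne_zero.mp hw).1 ▸ le_rfl
  perm_of_ne_zero w hw := (Finsupp.single_apply_ne_zero.mp hw).1 ▸ List.Perm.refl s

theorem IsUnitriangularAt.qshuffleL {f : List α →₀ ℚ[X]} {s v : List α}
    (hf : IsUnitriangularAt f s) (hsv : ∀ x ∈ s, ∀ y ∈ v, x < y) :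
    IsUnitriangularAt (qshuffleL f v) (s ++ v) := by
  have hlt : ∀ u, f u ≠ 0 → ∀ x ∈ u, ∀ y ∈ v, x < y := fun u hu x hx =>
    hsv x ((hf.perm_of_ne_zero u hu).subset hx)
  have hle : ∀ u w, f u ≠ 0 → qshuffle u v w ≠ 0 → s ++ v ≤ w := by
    intro u w hu hw
    refine le_trans ?_ (append_le_of_qshuffle_ne_zero (hlt u hu) hw)
    rcases (hf.le_of_ne_zero u hu).lt_or_eq with hsu | rfl
    · exact le_of_lt (List.append_lt_append_of_lt_of_length_eq hsu
        (hf.perm_of_ne_zero u hu).length_eq.symm v v)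
    · exact le_rfl
  refine ⟨?_, ?_, ?_, ?_⟩
  · have hs : f s ≠ 0 := by rw [hf.apply_self]; exact one_ne_zero
    rw [qshuffleL_apply, Finset.sum_eq_single_of_mem s (Finsupp.mem_support_iff.mpr hs),
      hf.apply_self, one_mul, qshuffle_apply_append hsv]
    intro u hu hus
    have hfu : f u ≠ 0 := Finsupp.mem_support_iff.mp hu
    have hsu : s < u := lt_of_le_of_ne (hf.le_of_ne_zero u hfu) (Ne.symm hus)
    refine mul_eq_zero_of_right _ (by_contra fun h => ?_)
    exact (List.append_lt_append_of_lt_of_length_eq hsu (hf.perm_of_ne_zero u hfu).length_eq.symm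
      v v).not_ge (append_le_of_qshuffle_ne_zero (hlt u hfu) h)
  · intro w hw
    rw [qshuffleL_apply, finsetSum_coeff]
    refine Finset.sum_eq_zero fun u _ => ?_
    rw [mul_coeff_zero]
    rcases eq_or_ne u s with rfl | hus
    · rw [coeff_zero_qshuffle_of_ne hw, mul_zero]
    · rw [hf.coeff_zero_of_ne u hus, zero_mul]
  · intro w hw
    obtain ⟨u, hu, huw⟩ := exists_qshuffle_ne_zero_of_qshuffleL_ne_zero hw
    exact hle u w hu huw
  · intro w hw
    obtain ⟨u, hu, huw⟩ := exists_qshuffle_ne_zero_of_qshuffleL_ne_zero hw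
    exact (List.Perm.of_qshuffle_ne_zero huw).trans ((hf.perm_of_ne_zero u hu).append_right v)

end Words

theorem lt_of_mem_oneLine {n : ℕ} {σ : Equiv.Perm (Fin n)} {x : ℕ} (hx : x ∈ oneLine σ) :
    x < n := by
  obtain ⟨i, rfl⟩ := List.mem_ofFn.mp hx
  exact (σ i).isLt

theorem oneLine_injective {n : ℕ} : Function.Injective (oneLine (n := n)) := fun _ _ h =>
  Equiv.ext fun i => Fin.ext (congrFun (List.ofFn_inj.mp h) i)

theorem sconcatList_nil : sconcatList [] = ⟨0, 1⟩ := rfl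

theorem sconcatList_cons (p : SigmaPerm) (L : List SigmaPerm) :
    sconcatList (p :: L) = sconcat p (sconcatList L) := rfl

theorem oneLine_sconcat (p q : SigmaPerm) :
    oneLine (sconcat p q).2 = oneLine p.2 ++ (oneLine q.2).map (· + p.1) := by
  change List.ofFn (fun i : Fin (p.1 + q.1) =>
    ((finSumFinEquiv.permCongr (p.2.sumCongr q.2)) i : ℕ)) = _
  rw [oneLine, oneLine, List.map_ofFn, List.ofFn_add]
  congr 1
  · refine congrArg _ (funext fun i => ?_)
    simp [show ∀ h, (Fin.castLE h i : Fin (p.1 + q.1)) = Fin.castAdd q.1 i from fun _ => rfl,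
      finSumFinEquiv_symm_apply_castAdd]
  · refine congrArg _ (funext fun i => ?_)
    simp only [Function.comp_apply, Equiv.permCongr_apply, finSumFinEquiv_symm_apply_natAdd,
      Equiv.Perm.sumCongr_apply, Sum.map_inr, finSumFinEquiv_apply_right, Fin.val_natAdd]
    omega

theorem IsUnitriangularAt.fiter {f : List ℕ →₀ ℚ[X]} {s : List ℕ} {m : ℕ}
    (hf : IsUnitriangularAt f s) (hs : ∀ x ∈ s, x < m) (L : List SigmaPerm) :
    IsUnitriangularAt (Fiter f m L) (s ++ (oneLine (sconcatList L).2).map (· + m)) := by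
  induction L generalizing f s m with
  | nil => simpa [Fiter, sconcatList_nil, oneLine] using hf
  | cons p L ih =>
    set v := (oneLine p.2).map (· + m)
    have hv : ∀ y ∈ v, m ≤ y ∧ y < m + p.1 := by
      intro y hy
      obtain ⟨x, hx, rfl⟩ := List.mem_map.mp hy
      have := lt_of_mem_oneLine hx
      omega
    have hsv : ∀ x ∈ s ++ v, x < m + p.1 := by
      intro x hx
      rcases List.mem_append.mp hx with hx | hx
      · have := hs x hx
        omega
      · exact (hv x hx).2
    have hword : s ++ v ++ (oneLine (sconcatList L).2).map (· + (m + p.1)) =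
        s ++ (oneLine (sconcatList (p :: L)).2).map (· + m) := by
      rw [sconcatList_cons, oneLine_sconcat, List.map_append,
        List.map_map, List.append_assoc]
      congr 3
      funext x
      simp only [Function.comp_apply]
      omega
    rw [Fiter, ← hword]
    exact ih (hf.qshuffleL fun x hx y hy => lt_of_lt_of_le (hs x hx) (hv y hy).1) hsv

theorem qshuffle_unitriangular_general {n : ℕ} (σ : Equiv.Perm (Fin n)) (L : List SigmaPerm)
    (hfac : sconcatList L = ⟨n, σ⟩) :
    (Fiter (Finsupp.single [] 1) 0 L) (oneLine σ) = 1 ∧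
    ∀ τ : Equiv.Perm (Fin n), τ ≠ σ →
      ((Fiter (Finsupp.single [] 1) 0 L) (oneLine τ)).coeff 0 = 0 ∧
      (¬ List.Lex (· < ·) (oneLine σ) (oneLine τ) →
        (Fiter (Finsupp.single [] 1) 0 L) (oneLine τ) = 0) := by
  have hF := (isUnitriangularAt_single []).fiter (m := 0) (by simp) L
  rw [hfac] at hF
  simp only [List.nil_append, add_zero, List.map_id'] at hF
  refine ⟨hF.apply_self, fun τ hτ => ⟨hF.coeff_zero_of_ne _ (oneLine_injective.ne hτ), ?_⟩⟩
  intro hnlt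
  by_contra hne
  exact hnlt (lt_of_le_of_ne (hF.le_of_ne_zero _ hne) (oneLine_injective.ne hτ.symm))

/-- Let `σ = σ₁ • ⋯ • σ_r` be the maximal factorization of `σ ∈ Sₙ` into
connected permutations, and let `F^σ` be the iterated shifted `q`-shuffle
`(⋯(σ₁ ⧢_q σ₂[k₁]) ⋯) ⧢_q σ_r[k₁+⋯+k_{r-1}] = Σ_τ c_τ(q)·τ`. Then `c_σ = 1`; and for
`τ ≠ σ`, `c_τ(0) = 0`, and `c_τ = 0` unless the one-line word of `σ` is lexicographically
smaller than that of `τ`. -/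
theorem qshuffle_unitriangular {n : ℕ} (σ : Equiv.Perm (Fin n)) (L : List SigmaPerm)
    (hconn : ∀ p ∈ L, IsConnectedPerm p) (hfac : sconcatList L = ⟨n, σ⟩) :
    (Fiter (Finsupp.single [] 1) 0 L) (oneLine σ) = 1 ∧
    ∀ τ : Equiv.Perm (Fin n), τ ≠ σ →
      ((Fiter (Finsupp.single [] 1) 0 L) (oneLine τ)).coeff 0 = 0 ∧
      (¬ List.Lex (· < ·) (oneLine σ) (oneLine τ) →
        (Fiter (Finsupp.single [] 1) 0 L) (oneLine τ) = 0) :=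
  qshuffle_unitriangular_general σ L hfac

end
end

section
/- For any two compositions I and J of n, p_I ∘ p_J = p_{I∨J} as maps Sₙ → Sₙ, where I∨J is the composition of n whose descent set is Des(I) ∪ Des(J). In particular each p_I is idempotent and the maps p_I, for I ranging over compositions of n, pairwise commute. -/
open scoped Classical

noncomputable section

theorem sconcatList_fst (L : List SigmaPerm) :
    (sconcatList L).1 = (L.map Sigma.fst).sum := by
  induction L with
  | nil => rfl
  | cons p L ih =>
    show p.1 + (sconcatList L).1 = _
    rw [ih]; rfl

theorem pI_aux {n : ℕ} (I : Composition n) (σ : Equiv.Perm (Fin n)) :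
    (sconcatList (List.ofFn (fun i : Fin I.length =>
      (⟨I.blocksFun i, std (fun j => σ (I.embedding i j))⟩ : SigmaPerm)))).1 = n := by
  rw [sconcatList_fst]
  have h2 : List.map Sigma.fst (List.ofFn (fun i : Fin I.length =>
      (⟨I.blocksFun i, std (fun j => σ (I.embedding i j))⟩ : SigmaPerm))) =
      List.ofFn (fun i : Fin I.length => I.blocksFun i) := by
    erw [List.map_ofFn]; rfl
  have : (List.ofFn fun i : Fin I.length => I.blocksFun i).sum = n := by
    rw [List.sum_ofFn]; exact I.sum_blocksFun
  erw [h2]; exact this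

/-- The operator `p_I : Sₙ → Sₙ`: cut the one-line word of `σ` into blocks of sizes given by
the composition `I`, standardize each block, and form the shifted concatenation. -/
def pI {n : ℕ} (I : Composition n) (σ : Equiv.Perm (Fin n)) : Equiv.Perm (Fin n) :=
  (finCongr (pI_aux I σ)).permCongr
    (sconcatList (List.ofFn (fun i : Fin I.length =>
      (⟨I.blocksFun i, std (fun j => σ (I.embedding i j))⟩ : SigmaPerm)))).2

/-- The descent set of a composition `I = (i₁,…,i_m)` of `n`:
`{i₁, i₁+i₂, …, i₁+⋯+i_{m-1}}`. -/
def des {n : ℕ} (I : Composition n) : Finset ℕ :=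
  (Finset.Ico 1 I.length).image I.sizeUpTo

end

noncomputable section

/-!
The relative order of `pI I σ` is lexicographic in (block of `I`, value of `σ`):
`pI I σ i < pI I σ j` iff `i` lies in an earlier block of `I` than `j`, or both lie in the same
block and `σ i < σ j`. Iterating, `pI I (pI J σ)` orders positions lexicographically by
(block of `I`, block of `J`, `σ`). The blocks of `K` are the intersections of blocks of `I` and
of `J`, and all block indices increase with the position, so this is the order by
(block of `K`, `σ`). A permutation of `Fin n` is determined by its relative order.
-/

-- `SigmaPerm` is a semireducible synonym of a sigma type, so rewriting terms built from it
-- requires `erw`.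
lemma sconcat_apply_castAdd (p q : SigmaPerm) (j : Fin p.1) :
    ((sconcat p q).2 (Fin.castAdd q.1 j) : ℕ) = p.2 j := by
  unfold sconcat; erw [Equiv.permCongr_apply]; simp

lemma sconcat_apply_natAdd (p q : SigmaPerm) (j : Fin q.1) :
    ((sconcat p q).2 (Fin.natAdd p.1 j) : ℕ) = p.1 + q.2 j := by
  unfold sconcat; erw [Equiv.permCongr_apply]; simp

lemma sconcatList_apply {L : List SigmaPerm} {k : ℕ} {p : SigmaPerm} (hp : L[k]? = some p)
    (j : Fin p.1) (x : Fin (sconcatList L).1)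
    (hx : (x : ℕ) = ((L.map Sigma.fst).take k).sum + j) :
    ((sconcatList L).2 x : ℕ) = ((L.map Sigma.fst).take k).sum + p.2 j := by
  induction L generalizing k with
  | nil => simp at hp
  | cons q L ih =>
    cases k with
    | zero =>
      obtain rfl : q = p := by simpa using hp
      obtain rfl : x = Fin.castAdd (sconcatList L).1 j := Fin.ext (by simpa using hx)
      exact (sconcat_apply_castAdd q (sconcatList L) j).trans (zero_add _).symm
    | succ k =>
      have hoff : (((q :: L).map Sigma.fst).take (k + 1)).sum
          = q.1 + ((L.map Sigma.fst).take k).sum := List.sum_cons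
      have hx_lt : (x : ℕ) < q.1 + (sconcatList L).1 := x.2
      rw [hoff] at hx ⊢
      obtain ⟨y, rfl⟩ : ∃ y : Fin (sconcatList L).1, x = Fin.natAdd q.1 y :=
        ⟨⟨x - q.1, by omega⟩, Fin.ext (by simp; omega)⟩
      rw [Fin.val_natAdd] at hx
      refine (sconcat_apply_natAdd q (sconcatList L) y).trans ?_
      rw [ih (by simpa using hp) y (by omega), add_assoc]

lemma std_lt_std_iff {A : Type*} [LinearOrder A] {n : ℕ} {w : Fin n → A}
    (hw : Function.Injective w) (i j : Fin n) : std w i < std w j ↔ w i < w j := by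
  have hstd : IsStd w (std w) := Classical.choose_spec (exists_isStd w)
  rcases lt_trichotomy i j with hij | rfl | hij
  · rw [hstd i j hij, (hw.ne hij.ne).le_iff_lt]
  · simp
  · rw [← not_le, ← not_le, ((std w).injective.ne hij.ne).le_iff_lt, hstd j i hij]

lemma Equiv.Perm.eq_of_lt_iff_lt {n : ℕ} {ρ ρ' : Equiv.Perm (Fin n)}
    (h : ∀ i j, ρ i < ρ j ↔ ρ' i < ρ' j) : ρ = ρ' := by
  have hmono : StrictMono (ρ' ∘ ρ.symm) := fun a b hab => by
    simpa [← h] using hab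
  have hid : ρ' ∘ ρ.symm = id :=
    (hmono.range_inj strictMono_id).1 (by simp [Set.range_comp, ρ.symm.surjective.range_eq])
  refine Equiv.ext fun i => ?_
  simpa using (congrFun hid (ρ i)).symm

lemma Monotone.lt_iff_lt_of_eq_iff_eq {α β γ : Type*} [LinearOrder α] [PartialOrder β]
    [PartialOrder γ] {f : α → β} {g : α → γ} (hf : Monotone f) (hg : Monotone g)
    (h : ∀ a b, f a = f b ↔ g a = g b) (a b : α) : f a < f b ↔ g a < g b :=
  ⟨fun hab => (hg (hf.reflect_lt hab).le).lt_of_ne fun e => hab.ne ((h a b).2 e),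
    fun hab => (hf (hg.reflect_lt hab).le).lt_of_ne fun e => hab.ne ((h a b).1 e)⟩

lemma Monotone.lt_iff_lt_or_eq_and_lt {α β : Type*} [LinearOrder α] [PartialOrder β]
    {f : α → β} (hf : Monotone f) (a b : α) : a < b ↔ f a < f b ∨ f a = f b ∧ a < b :=
  ⟨fun hab => (hf hab.le).lt_or_eq.imp_right fun e => ⟨e, hab⟩,
    fun hab => hab.elim hf.reflect_lt And.right⟩

namespace Composition

variable {n : ℕ} (c : Composition n)

lemma monotone_index : Monotone c.index := by
  intro i j hij
  by_contra! h
  have hj := c.lt_sizeUpTo_index_succ j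
  have hji := c.monotone_sizeUpTo (show (c.index j : ℕ) + 1 ≤ c.index i from h)
  rw [Fin.val_succ] at hj
  have hi := c.sizeUpTo_index_le i
  have : (i : ℕ) ≤ j := hij
  omega

lemma index_lt_index_iff {i j : Fin n} :
    c.index i < c.index j ↔ ∃ d ∈ des c, (i : ℕ) < d ∧ d ≤ (j : ℕ) := by
  simp only [des, Finset.mem_image, Finset.mem_Ico, exists_exists_and_eq_and]
  constructor
  · intro h
    have h' : (c.index i : ℕ) + 1 ≤ c.index j := h
    exact ⟨c.index i + 1, ⟨by omega, by have := (c.index j).2; omega⟩,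
      c.lt_sizeUpTo_index_succ i, (c.monotone_sizeUpTo h').trans (c.sizeUpTo_index_le j)⟩
  · rintro ⟨m, -, hi, hj⟩
    have hm_gt : (c.index i : ℕ) < m := by
      by_contra! hm
      have := (c.monotone_sizeUpTo hm).trans (c.sizeUpTo_index_le i)
      omega
    have hm_le : m ≤ c.index j := by
      by_contra! hm
      have := (c.lt_sizeUpTo_index_succ j).trans_le (c.monotone_sizeUpTo (Nat.succ_le_of_lt hm))
      omega
    exact Fin.lt_def.2 (by omega)

lemma index_eq_index_iff {i j : Fin n} :
    c.index i = c.index j ↔ ∀ d ∈ des c, (d ≤ (i : ℕ) ↔ d ≤ (j : ℕ)) := by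
  rw [← not_iff_not, ← Ne, ← lt_or_lt_iff_ne, c.index_lt_index_iff, c.index_lt_index_iff]
  push Not
  constructor
  · rintro (⟨d, hd, hi, hj⟩ | ⟨d, hd, hj, hi⟩) <;> exact ⟨d, hd, by omega⟩
  · rintro ⟨d, hd, h⟩
    by_cases hi : d ≤ (i : ℕ)
    · exact Or.inr ⟨d, hd, by omega⟩
    · exact Or.inl ⟨d, hd, by omega⟩

end Composition

section pI

variable {n : ℕ} (I : Composition n) (σ : Equiv.Perm (Fin n))

lemma pI_embedding (k : Fin I.length) (a : Fin (I.blocksFun k)) :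
    pI I σ (I.embedding k a) = I.embedding k (std (fun j => σ (I.embedding k j)) a) := by
  have hblocks : (List.ofFn fun i : Fin I.length =>
      (⟨I.blocksFun i, std (fun j => σ (I.embedding i j))⟩ : SigmaPerm)).map Sigma.fst
        = I.blocks := by
    erw [List.map_ofFn]; exact I.ofFn_blocksFun
  apply Fin.ext
  rw [pI, Equiv.permCongr_apply, finCongr_apply, Fin.val_cast, Composition.coe_embedding]
  erw [sconcatList_apply (k := k) ((List.getElem?_ofFn ..).trans (dif_pos k.2)) a, hblocks]
  · rfl
  · erw [Composition.coe_embedding, hblocks]; rfl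

lemma index_pI (i : Fin n) : I.index (pI I σ i) = I.index i := by
  obtain ⟨k, a, rfl⟩ : ∃ k a, I.embedding k a = i := ⟨_, _, I.embedding_comp_inv i⟩
  rw [pI_embedding, Composition.index_embedding, Composition.index_embedding]

lemma pI_lt_pI_iff_of_index_eq {i j : Fin n} (h : I.index i = I.index j) :
    pI I σ i < pI I σ j ↔ σ i < σ j := by
  obtain ⟨k, a, rfl⟩ : ∃ k a, I.embedding k a = i := ⟨_, _, I.embedding_comp_inv i⟩
  obtain ⟨l, b, rfl⟩ : ∃ l b, I.embedding l b = j := ⟨_, _, I.embedding_comp_inv j⟩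
  simp only [Composition.index_embedding] at h
  subst h
  rw [pI_embedding, pI_embedding, (I.embedding k).lt_iff_lt]
  exact std_lt_std_iff (σ.injective.comp (I.embedding k).injective) a b

lemma pI_lt_pI_iff (i j : Fin n) :
    pI I σ i < pI I σ j ↔ I.index i < I.index j ∨ I.index i = I.index j ∧ σ i < σ j := by
  rw [I.monotone_index.lt_iff_lt_or_eq_and_lt, index_pI, index_pI]
  exact or_congr_right (and_congr_right (pI_lt_pI_iff_of_index_eq I σ))

end pI

theorem pI_comp_pI_of_des_eq_union {n : ℕ} {I J K : Composition n}
    (hK : des K = des I ∪ des J) : pI I ∘ pI J = pI K := by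
  have hfib : ∀ i j, K.index i = K.index j ↔ I.index i = I.index j ∧ J.index i = J.index j := by
    simp only [Composition.index_eq_index_iff, hK, Finset.forall_mem_union, implies_true]
  have hlt (i j : Fin n) : K.index i < K.index j ↔
      toLex (I.index i, J.index i) < toLex (I.index j, J.index j) :=
    K.monotone_index.lt_iff_lt_of_eq_iff_eq
      (Prod.Lex.toLex_mono.comp (I.monotone_index.prodMk J.monotone_index))
      (by simpa using hfib) i j
  funext σ
  refine Equiv.Perm.eq_of_lt_iff_lt fun i j => ?_
  rw [Function.comp_apply, pI_lt_pI_iff, pI_lt_pI_iff, pI_lt_pI_iff, hlt, hfib,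
    Prod.Lex.toLex_lt_toLex]
  tauto

/-- For compositions `I, J` of `n`, `p_I ∘ p_J = p_{I∨J}`, where `I∨J` is the
composition whose descent set is `Des(I) ∪ Des(J)`. In particular each `p_I` is idempotent and
the maps `p_I` pairwise commute. -/
theorem pI_comp_pI {n : ℕ} (I J K : Composition n) (hK : des K = des I ∪ des J) :
    (pI I ∘ pI J = pI K) ∧ (pI I ∘ pI I = pI I) ∧ (pI I ∘ pI J = pI J ∘ pI I) := by
  refine ⟨pI_comp_pI_of_des_eq_union hK, pI_comp_pI_of_des_eq_union (Finset.union_self _).symm, ?_⟩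
  rw [pI_comp_pI_of_des_eq_union hK, pI_comp_pI_of_des_eq_union (hK.trans (Finset.union_comm _ _))]

end
end

section
/- Let u and v be words over a linearly ordered alphabet Ω and let I be an interval of Ω. If u ≡ v for the plactic congruence, then u|_I ≡ v|_I, where w|_I denotes the subword of w consisting of those letters that belong to I. -/
open scoped Classical

/-- The elementary Knuth relations: `xzy ≡ zxy` for `x ≤ y < z`, and
`yxz ≡ yzx` for `x < y ≤ z`. -/
inductive KnuthRel {Ω : Type*} [LinearOrder Ω] : List Ω → List Ω → Prop
  | knuth1 (x y z : Ω) : x ≤ y → y < z → KnuthRel [x, z, y] [z, x, y]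
  | knuth2 (x y z : Ω) : x < y → y ≤ z → KnuthRel [y, x, z] [y, z, x]

/-- One elementary plactic rewriting step: a Knuth relation applied inside a word. -/
def PlacticStep {Ω : Type*} [LinearOrder Ω] (u v : List Ω) : Prop :=
  ∃ (l r a b : List Ω), KnuthRel a b ∧ u = l ++ a ++ r ∧ v = l ++ b ++ r

/-- The plactic congruence: the congruence on the free monoid generated by the Knuth
relations (i.e. the equivalence relation generated by elementary plactic steps, which is
automatically compatible with concatenation). -/
def Plactic {Ω : Type*} [LinearOrder Ω] : List Ω → List Ω → Prop :=
  Relation.EqvGen PlacticStep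

/-! Restricting a Knuth relation to an interval either keeps all three letters, giving the
same Knuth relation, or deletes one of the two letters that the relation swaps, in which
case both sides restrict to the same word. Restriction commutes with concatenation, so
it maps every elementary plactic step to a plactic equivalence. -/

namespace Plactic

variable {Ω : Type*} [LinearOrder Ω]

theorem equivalence : Equivalence (@Plactic Ω _) :=
  Relation.EqvGen.is_equivalence _

theorem of_knuthRel {a b : List Ω} (h : KnuthRel a b) : Plactic a b :=
  Relation.EqvGen.rel _ _ ⟨[], [], a, b, h, by simp, by simp⟩

theorem map_of_step {f : List Ω → List Ω} (hf : ∀ u v, PlacticStep u v → Plactic (f u) (f v))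
    {u v : List Ω} (h : Plactic u v) : Plactic (f u) (f v) :=
  (equivalence.comap f).eqvGen_iff.mp (Relation.EqvGen.mono hf _ _ h)

theorem append_append (l r : List Ω) {a b : List Ω} (h : Plactic a b) :
    Plactic (l ++ a ++ r) (l ++ b ++ r) := by
  refine map_of_step (f := fun w => l ++ w ++ r) ?_ h
  rintro _ _ ⟨l', r', a', b', hk, rfl, rfl⟩
  exact Relation.EqvGen.rel _ _ ⟨l ++ l', r' ++ r, a', b', hk, by simp, by simp⟩

end Plactic

theorem List.filter_swap_of_not_and {α : Type*} {p : α → Bool} (l r : List α) {x z : α}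
    (h : ¬(p x ∧ p z)) : (l ++ [x, z] ++ r).filter p = (l ++ [z, x] ++ r).filter p := by
  by_cases hx : p x <;> by_cases hz : p z <;> simp_all

section Restrict

variable {Ω : Type*} [LinearOrder Ω] {I : Set Ω}

theorem KnuthRel.plactic_filter (hI : I.OrdConnected) {a b : List Ω} (h : KnuthRel a b) :
    Plactic (a.filter fun x => decide (x ∈ I)) (b.filter fun x => decide (x ∈ I)) := by
  rcases h with ⟨x, y, z, hxy, hyz⟩ | ⟨x, y, z, hxy, hyz⟩
  · by_cases hxz : x ∈ I ∧ z ∈ I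
    · have hy : y ∈ I := hI.out hxz.1 hxz.2 ⟨hxy, hyz.le⟩
      simpa [hxz, hy] using Plactic.of_knuthRel (.knuth1 x y z hxy hyz)
    · convert Plactic.equivalence.refl _ using 1
      exact (List.filter_swap_of_not_and [] [y] (by simpa using hxz)).symm
  · by_cases hxz : x ∈ I ∧ z ∈ I
    · have hy : y ∈ I := hI.out hxz.1 hxz.2 ⟨hxy.le, hyz⟩
      simpa [hxz, hy] using Plactic.of_knuthRel (.knuth2 x y z hxy hyz)
    · convert Plactic.equivalence.refl _ using 1
      exact (List.filter_swap_of_not_and [y] [] (by simpa using hxz)).symm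

theorem Plactic.filter_of_ordConnected (hI : I.OrdConnected) {u v : List Ω}
    (h : Plactic u v) :
    Plactic (u.filter fun x => decide (x ∈ I)) (v.filter fun x => decide (x ∈ I)) := by
  refine Plactic.map_of_step ?_ h
  rintro _ _ ⟨l, r, a, b, hk, rfl, rfl⟩
  simpa only [List.filter_append] using Plactic.append_append _ _ (hk.plactic_filter hI)

end Restrict

/-- The plactic congruence is compatible with restriction to intervals:
if `u ≡ v` then `u|_I ≡ v|_I` for any interval `I` of the alphabet. -/
theorem plactic_restrict {Ω : Type*} [LinearOrder Ω] (I : Set Ω)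
    (hI : ∀ a b c : Ω, a ≤ b → b ≤ c → a ∈ I → c ∈ I → b ∈ I)
    (u v : List Ω) (h : Plactic u v) :
    Plactic (u.filter fun x => decide (x ∈ I)) (v.filter fun x => decide (x ∈ I)) :=
  h.filter_of_ordConnected ⟨fun a ha c hc _ hb => hI a _ c hb.1 hb.2 ha hc⟩
end

section
/- Let P = P₁ ∧ P₂ and P' = P'₁ ∧ P'₂, where P₁, P₂, P'₁, P'₂ are partial orders on {1,…,a}, {1,…,b}, {1,…,a'}, {1,…,b'} respectively, so that P is a partial order on {1,…,n} with n = a+b+1 and P' is a partial order on {1,…,m} with m = a'+b'+1. Then L(P ⊔ P') = L(P₁ ∧ (P₂ ⊔ P')) ⊔ L((P ⊔ P'₁) ∧ P'₂), a disjoint union of subsets of S_{n+m}. (Applied to the posets associated with planar binary trees, this is the product rule of the Loday–Ronco Hopf algebra of binary trees realized inside FQSym.) -/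
/-- `IsPosetOn n r` : `r` is (the strict order of) a partial order on `{0,…,n−1}`. -/
def IsPosetOn (n : ℕ) (r : ℕ → ℕ → Prop) : Prop :=
  (∀ i j, r i j → i < n ∧ j < n) ∧ (∀ i, ¬ r i i) ∧
    (∀ i j k, r i j → r j k → r i k)

/-- The set `L(P)` of linear extensions of a partial order `r` on `{0,…,n−1}`:
permutations `σ` such that `r i j` implies that `i` occurs before `j` in the one-line
word of `σ`. -/
def LinExt (n : ℕ) (r : ℕ → ℕ → Prop) : Set (Equiv.Perm (Fin n)) :=
  {σ | ∀ i j : Fin n, r (i : ℕ) (j : ℕ) → σ⁻¹ i < σ⁻¹ j}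

/-- Concatenation `P₁ ⊔ P₂` of a poset on `{0,…,k−1}` and a poset (shifted by `k`). -/
def sqcupRel (k : ℕ) (r₁ r₂ : ℕ → ℕ → Prop) : ℕ → ℕ → Prop :=
  fun i j => (i < k ∧ j < k ∧ r₁ i j) ∨ (k ≤ i ∧ k ≤ j ∧ r₂ (i - k) (j - k))

/-- The poset `P₁ ∧ P₂` on `{0,…,k+l}`: the juxtaposition of `P₁` (on `{0,…,k−1}`) and
`P₂` (shifted to `{k+1,…,k+l}`), with the element `k` adjoined as greatest element. -/
def wedgeRel (k l : ℕ) (r₁ r₂ : ℕ → ℕ → Prop) : ℕ → ℕ → Prop :=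
  fun i j => (i < k ∧ j < k ∧ r₁ i j) ∨
    (k + 1 ≤ i ∧ k + 1 ≤ j ∧ r₂ (i - (k + 1)) (j - (k + 1))) ∨
    (j = k ∧ i ≠ k ∧ i < k + l + 1)

/-- `IsShuffle u v w` : `w` is a shuffle of the words `u` and `v`. -/
inductive IsShuffle {α : Type*} : List α → List α → List α → Prop
  | nil : IsShuffle [] [] []
  | left (a : α) (u v w : List α) : IsShuffle u v w → IsShuffle (a :: u) v (a :: w)
  | right (a : α) (u v w : List α) : IsShuffle u v w → IsShuffle u (a :: v) (a :: w)

/-! The maxima `x = a` of `P` and `y = a + b + 1 + a'` of `P'` are incomparable in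
`P ⊔ P'`. Up to transitivity, `P₁ ∧ (P₂ ⊔ P')` is `P ⊔ P'` with the relation `y < x`
added and `(P ⊔ P'₁) ∧ P'₂` is `P ⊔ P'` with `x < y` added, so a linear extension of
`P ⊔ P'` lies in the first or the second according to whether `y` precedes `x`, and none
lies in both. -/

section LinExt

variable {n : ℕ} {r s t : ℕ → ℕ → Prop}

theorem linExt_anti (h : r ≤ s) : LinExt n s ⊆ LinExt n r :=
  fun _ hσ i j hij => hσ i j (h _ _ hij)

theorem linExt_inter_eq_empty_of_rel_of_rel (i j : Fin n) (hr : r i j) (hs : s j i) :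
    LinExt n r ∩ LinExt n s = ∅ :=
  Set.eq_empty_of_forall_notMem fun _ ⟨hσr, hσs⟩ => lt_asymm (hσr i j hr) (hσs j i hs)

theorem mem_linExt_of_rel_or_below {σ : Equiv.Perm (Fin n)} (hσ : σ ∈ LinExt n r)
    {x y : Fin n} (hyx : σ⁻¹ y < σ⁻¹ x)
    (hs : ∀ i j, s i j → r i j ∨ (j = x ∧ (i = y ∨ r i y))) : σ ∈ LinExt n s := by
  intro i j hij
  rcases hs i j hij with hr | ⟨hj, hi | hiy⟩
  · exact hσ i j hr
  · rw [Fin.ext hj, Fin.ext hi]; exact hyx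
  · rw [Fin.ext hj]; exact (hσ i y hiy).trans hyx

theorem linExt_eq_union {x y : Fin n} (hxy : x ≠ y) (hrs : r ≤ s) (hrt : r ≤ t)
    (hs : ∀ i j, s i j → r i j ∨ (j = x ∧ (i = y ∨ r i y)))
    (ht : ∀ i j, t i j → r i j ∨ (j = y ∧ (i = x ∨ r i x))) :
    LinExt n r = LinExt n s ∪ LinExt n t := by
  refine subset_antisymm (fun σ hσ => ?_)
    (Set.union_subset (linExt_anti hrs) (linExt_anti hrt))
  rcases lt_or_gt_of_ne (σ⁻¹.injective.ne hxy) with hxy | hyx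
  · exact Or.inr (mem_linExt_of_rel_or_below hσ hxy ht)
  · exact Or.inl (mem_linExt_of_rel_or_below hσ hyx hs)

end LinExt

section Rel

variable {a b a' b' : ℕ} {r₁ r₂ r₁' r₂' : ℕ → ℕ → Prop}

theorem sqcupRel_wedgeRel_le_wedgeRel_sqcupRel_left (l : ℕ) (Q : ℕ → ℕ → Prop) :
    sqcupRel (a + b + 1) (wedgeRel a b r₁ r₂) Q ≤
      wedgeRel a (b + l) r₁ (sqcupRel b r₂ Q) := by
  intro i j h
  rcases h with ⟨hi, hj, ⟨hi1, hj1, h⟩ | ⟨hi1, hj1, h⟩ | ⟨hj1, hi1, hlt⟩⟩ |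
    ⟨hi, hj, h⟩
  · exact Or.inl ⟨hi1, hj1, h⟩
  · exact Or.inr (Or.inl ⟨hi1, hj1, Or.inl ⟨by omega, by omega, h⟩⟩)
  · exact Or.inr (Or.inr ⟨hj1, hi1, by omega⟩)
  · refine Or.inr (Or.inl ⟨by omega, by omega, Or.inr ⟨by omega, by omega, ?_⟩⟩)
    rwa [Nat.sub_sub, Nat.sub_sub, show a + 1 + b = a + b + 1 by omega]

theorem sqcupRel_wedgeRel_le_wedgeRel_sqcupRel_right (k : ℕ) (W : ℕ → ℕ → Prop) :
    sqcupRel k W (wedgeRel a' b' r₁' r₂') ≤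
      wedgeRel (k + a') b' (sqcupRel k W r₁') r₂' := by
  intro i j h
  rcases h with ⟨hi, hj, h⟩ |
    ⟨hi, hj, ⟨hi1, hj1, h⟩ | ⟨hi1, hj1, h⟩ | ⟨hj1, hi1, hlt⟩⟩
  · exact Or.inl ⟨by omega, by omega, Or.inl ⟨hi, hj, h⟩⟩
  · exact Or.inl ⟨by omega, by omega, Or.inr ⟨hi, hj, h⟩⟩
  · refine Or.inr (Or.inl ⟨by omega, by omega, ?_⟩)
    rwa [Nat.sub_sub, Nat.sub_sub, ← Nat.add_assoc] at h
  · exact Or.inr (Or.inr ⟨by omega, by omega, by omega⟩)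

theorem wedgeRel_sqcupRel_left_cases {i j : ℕ}
    (h : wedgeRel a (b + (a' + b' + 1)) r₁ (sqcupRel b r₂ (wedgeRel a' b' r₁' r₂')) i j) :
    let R := sqcupRel (a + b + 1) (wedgeRel a b r₁ r₂) (wedgeRel a' b' r₁' r₂')
    R i j ∨ (j = a ∧ (i = a + b + 1 + a' ∨ R i (a + b + 1 + a'))) := by
  rcases h with ⟨hi, hj, h⟩ | ⟨hi, hj, ⟨hi2, hj2, h⟩ | ⟨hi2, hj2, h⟩⟩ |
    ⟨hj, hi, hlt⟩
  · exact Or.inl (Or.inl ⟨by omega, by omega, Or.inl ⟨hi, hj, h⟩⟩)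
  · exact Or.inl (Or.inl ⟨by omega, by omega, Or.inr (Or.inl ⟨by omega, by omega, h⟩)⟩)
  · refine Or.inl (Or.inr ⟨by omega, by omega, ?_⟩)
    rwa [Nat.sub_sub, Nat.sub_sub, Nat.add_right_comm a 1 b] at h
  · by_cases hP : i < a + b + 1
    · exact Or.inl (Or.inl ⟨hP, by omega, Or.inr (Or.inr ⟨hj, hi, by omega⟩)⟩)
    · by_cases hy : i = a + b + 1 + a'
      · exact Or.inr ⟨hj, Or.inl hy⟩
      · exact Or.inr ⟨hj, Or.inr (Or.inr ⟨by omega, by omega,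
          Or.inr (Or.inr ⟨by omega, by omega, by omega⟩)⟩)⟩

theorem wedgeRel_sqcupRel_right_cases {i j : ℕ}
    (h : wedgeRel (a + b + 1 + a') b'
      (sqcupRel (a + b + 1) (wedgeRel a b r₁ r₂) r₁') r₂' i j) :
    let R := sqcupRel (a + b + 1) (wedgeRel a b r₁ r₂) (wedgeRel a' b' r₁' r₂')
    R i j ∨ (j = a + b + 1 + a' ∧ (i = a ∨ R i a)) := by
  rcases h with ⟨hi, hj, ⟨hi1, hj1, h⟩ | ⟨hi1, hj1, h⟩⟩ | ⟨hi, hj, h⟩ |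
    ⟨hj, hi, hlt⟩
  · exact Or.inl (Or.inl ⟨hi1, hj1, h⟩)
  · exact Or.inl (Or.inr ⟨hi1, hj1, Or.inl ⟨by omega, by omega, h⟩⟩)
  · refine Or.inl (Or.inr ⟨by omega, by omega, Or.inr (Or.inl ⟨by omega, by omega, ?_⟩)⟩)
    rwa [Nat.sub_sub, Nat.sub_sub, ← Nat.add_assoc]
  · by_cases hP' : a + b + 1 ≤ i
    · exact Or.inl (Or.inr ⟨hP', by omega, Or.inr (Or.inr ⟨by omega, by omega, by omega⟩)⟩)
    · by_cases hx : i = a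
      · exact Or.inr ⟨hj, Or.inl hx⟩
      · exact Or.inr ⟨hj, Or.inr (Or.inl ⟨by omega, by omega,
          Or.inr (Or.inr ⟨rfl, hx, by omega⟩)⟩)⟩

end Rel

theorem linExt_sqcup_wedge_general {a b a' b' : ℕ}
    (r₁ r₂ r₁' r₂' : ℕ → ℕ → Prop) :
    LinExt (a + b + 1 + (a' + b' + 1))
        (sqcupRel (a + b + 1) (wedgeRel a b r₁ r₂) (wedgeRel a' b' r₁' r₂')) =
      LinExt (a + b + 1 + (a' + b' + 1))
          (wedgeRel a (b + (a' + b' + 1)) r₁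
            (sqcupRel b r₂ (wedgeRel a' b' r₁' r₂'))) ∪
        LinExt (a + b + 1 + (a' + b' + 1))
          (wedgeRel (a + b + 1 + a') b'
            (sqcupRel (a + b + 1) (wedgeRel a b r₁ r₂) r₁') r₂') ∧
    LinExt (a + b + 1 + (a' + b' + 1))
          (wedgeRel a (b + (a' + b' + 1)) r₁
            (sqcupRel b r₂ (wedgeRel a' b' r₁' r₂'))) ∩
        LinExt (a + b + 1 + (a' + b' + 1))
          (wedgeRel (a + b + 1 + a') b'
            (sqcupRel (a + b + 1) (wedgeRel a b r₁ r₂) r₁') r₂') = ∅ := by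
  let top : Fin (a + b + 1 + (a' + b' + 1)) := ⟨a, by omega⟩
  let top' : Fin (a + b + 1 + (a' + b' + 1)) := ⟨a + b + 1 + a', by omega⟩
  have hne : top ≠ top' := Fin.ne_of_val_ne (show a ≠ a + b + 1 + a' by omega)
  refine ⟨linExt_eq_union hne
    (sqcupRel_wedgeRel_le_wedgeRel_sqcupRel_left _ _)
    (sqcupRel_wedgeRel_le_wedgeRel_sqcupRel_right _ _)
    (fun _ _ => wedgeRel_sqcupRel_left_cases)
    (fun _ _ => wedgeRel_sqcupRel_right_cases), ?_⟩
  exact linExt_inter_eq_empty_of_rel_of_rel top' top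
    (Or.inr (Or.inr ⟨rfl, (by omega : a + b + 1 + a' ≠ a),
      (by omega : a + b + 1 + a' < a + (b + (a' + b' + 1)) + 1)⟩))
    (Or.inr (Or.inr ⟨rfl, (by omega : a ≠ a + b + 1 + a'),
      (by omega : a < a + b + 1 + a' + b' + 1)⟩))

/-- product rule of the Loday–Ronco algebra inside `FQSym`.
For `P = P₁ ∧ P₂` and `P' = P'₁ ∧ P'₂`,
`L(P ⊔ P') = L(P₁ ∧ (P₂ ⊔ P')) ⊔ L((P ⊔ P'₁) ∧ P'₂)` (a disjoint union). -/
theorem linExt_sqcup_wedge {a b a' b' : ℕ}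
    (r₁ r₂ r₁' r₂' : ℕ → ℕ → Prop)
    (h₁ : IsPosetOn a r₁) (h₂ : IsPosetOn b r₂)
    (h₁' : IsPosetOn a' r₁') (h₂' : IsPosetOn b' r₂') :
    LinExt (a + b + 1 + (a' + b' + 1))
        (sqcupRel (a + b + 1) (wedgeRel a b r₁ r₂) (wedgeRel a' b' r₁' r₂')) =
      LinExt (a + b + 1 + (a' + b' + 1))
          (wedgeRel a (b + (a' + b' + 1)) r₁
            (sqcupRel b r₂ (wedgeRel a' b' r₁' r₂'))) ∪
        LinExt (a + b + 1 + (a' + b' + 1))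
          (wedgeRel (a + b + 1 + a') b'
            (sqcupRel (a + b + 1) (wedgeRel a b r₁ r₂) r₁') r₂') ∧
    LinExt (a + b + 1 + (a' + b' + 1))
          (wedgeRel a (b + (a' + b' + 1)) r₁
            (sqcupRel b r₂ (wedgeRel a' b' r₁' r₂'))) ∩
        LinExt (a + b + 1 + (a' + b' + 1))
          (wedgeRel (a + b + 1 + a') b'
            (sqcupRel (a + b + 1) (wedgeRel a b r₁ r₂) r₁') r₂') = ∅ :=
  linExt_sqcup_wedge_general r₁ r₂ r₁' r₂'
end

section
/- Let N ≥ 1 and let P and Q be packed matrices. Then in the tensor algebra ℚ{X} one has MS_P · MS_Q = Σ_{R ∈ ⧢(P,Q)} MS_R. In particular, the ℚ-linear span of the elements MS_M, over packed matrices M, is a subalgebra of ℚ{X} (the algebra MQSym of matrix quasi-symmetric functions). -/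
open scoped Classical

noncomputable section

/-- A packed matrix: a matrix of nonnegative integers with no zero row and no zero column. -/
structure PackedMatrix where
  p : ℕ
  q : ℕ
  entry : Fin p → Fin q → ℕ
  rows_nonzero : ∀ i, ∃ j, entry i j ≠ 0
  cols_nonzero : ∀ j, ∃ i, entry i j ≠ 0

/-- The ideal `ℚ[X]⁺` of polynomials with zero constant term, as a `ℚ`-submodule of
`ℚ[x₁,…,x_N]`. -/
def PolyPlus (N : ℕ) : Submodule ℚ (MvPolynomial (Fin N) ℚ) :=
  (RingHom.ker (MvPolynomial.constantCoeff (R := ℚ) (σ := Fin N))).restrictScalars ℚ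

/-- The tensor algebra `ℚ{X} = T(ℚ[X]⁺)`. -/
abbrev QX (N : ℕ) := TensorAlgebra ℚ (PolyPlus N)

/-- The `j`-th column monomial `m_j = Π_i a_i^{M_{ij}}` of a packed matrix, for a choice
`a : Fin p → Fin N` of `p` variables; it lies in `ℚ[X]⁺` since column `j` is nonzero. -/
def colMonomial (N : ℕ) (P : PackedMatrix) (a : Fin P.p → Fin N) (j : Fin P.q) :
    PolyPlus N :=
  ⟨∏ i, MvPolynomial.X (a i) ^ P.entry i j, by
    obtain ⟨i, hi⟩ := P.cols_nonzero j
    simp only [PolyPlus, Submodule.restrictScalars_mem, RingHom.mem_ker, map_prod, map_pow,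
      MvPolynomial.constantCoeff_X]
    exact Finset.prod_eq_zero (Finset.mem_univ i) (zero_pow hi)⟩

/-- `A^M ∈ ℚ{X}` : the dot product `m₁ · m₂ ⋯ m_q` of the column monomials of `M` on the
variable set `A` (given by a strictly increasing `a : Fin p → Fin N`). -/
def dotMonomial (N : ℕ) (P : PackedMatrix) (a : Fin P.p → Fin N) : QX N :=
  (List.ofFn fun j : Fin P.q => TensorAlgebra.ι ℚ (colMonomial N P a j)).prod

/-- `MS_M = Σ_{A ⊆ X, |A| = p} A^M ∈ ℚ{X}`. -/
def MS (N : ℕ) (P : PackedMatrix) : QX N :=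
  ∑ a ∈ Finset.univ.filter (fun a : Fin P.p → Fin N => StrictMono a),
    dotMonomial N P a

/-- The augmented shuffle `⧢(P,Q)` of two packed matrices: all packed matrices obtained by
inserting zero rows into `P` and `Q` so as to reach a common height and concatenating the
resulting matrices horizontally, keeping only the results with no zero row. Here `f` (resp.
`g`) records the positions of the rows of `P` (resp. `Q`) in the result. -/
def AugShuffle (P Q : PackedMatrix) : Set PackedMatrix :=
  {R | ∃ h : R.q = P.q + Q.q, ∃ (f : Fin P.p → Fin R.p) (g : Fin Q.p → Fin R.p),
    StrictMono f ∧ StrictMono g ∧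
    (∀ i : Fin R.p, i ∈ Set.range f ∨ i ∈ Set.range g) ∧
    (∀ (i : Fin P.p) (j : Fin P.q),
      R.entry (f i) (Fin.cast h.symm (Fin.castAdd Q.q j)) = P.entry i j) ∧
    (∀ i : Fin R.p, i ∉ Set.range f → ∀ j : Fin P.q,
      R.entry i (Fin.cast h.symm (Fin.castAdd Q.q j)) = 0) ∧
    (∀ (i : Fin Q.p) (j : Fin Q.q),
      R.entry (g i) (Fin.cast h.symm (Fin.natAdd P.q j)) = Q.entry i j) ∧
    (∀ i : Fin R.p, i ∉ Set.range g → ∀ j : Fin Q.q,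
      R.entry i (Fin.cast h.symm (Fin.natAdd P.q j)) = 0)}

end

/-!
Choosing strictly increasing variables `a` for `P` and `b` for `Q` is the same as choosing the
merged variable set `C = A ∪ B`, enumerated increasingly by `c`, together with the positions of
`A` and `B` inside `C`. Those positions are exactly the zero-row insertions of the augmented
shuffle, so they form the data `σ` of a matrix `R ∈ ⧢(P,Q)`, and `A^P · B^Q = C^R` because the
columns of `R` are those of `P` followed by those of `Q`. Summing over `(a, b)`, equivalently over
`(σ, c)`, gives the product rule, and with it the closure of the span of the `MS_M` under
multiplication.
-/

noncomputable section

open Function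
open scoped Pointwise

lemma Function.Injective.range_eq_support_extend {α β γ : Type*} [Zero γ] {f : α → β}
    (hf : Injective f) {G : α → γ} (hG : ∀ a, G a ≠ 0) :
    Set.range f = support (extend f G 0) := by
  ext b
  by_cases hb : ∃ a, f a = b
  · obtain ⟨a, rfl⟩ := hb
    simpa [hf.extend_apply] using hG a
  · simp [hb]

lemma Function.Injective.prod_extend_zero {α β γ M : Type*} [Fintype α] [Fintype β] [Zero γ]
    [CommMonoid M] {f : α → β} (hf : Injective f) (G : α → γ) (F : β → γ → M)
    (hF : ∀ b, F b 0 = 1) : ∏ b, F b (extend f G (0 : β → γ) b) = ∏ a, F (f a) (G a) := by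
  classical
  rw [← Finset.prod_subset (Finset.subset_univ (Finset.univ.image f)), Finset.prod_image hf.injOn]
  · simp only [hf.extend_apply]
  · intro b _ hb
    rw [extend_apply' G (0 : β → γ) b (by simpa using hb), Pi.zero_apply, hF]

lemma StrictMono.exists_strictMono_comp_eq {α β γ : Type*} [Preorder α] [LinearOrder β]
    [Preorder γ] {c : β → α} (hc : StrictMono c) {a : γ → α} (ha : StrictMono a)
    (h : Set.range a ⊆ Set.range c) : ∃ f : γ → β, StrictMono f ∧ c ∘ f = a := by
  choose f hf using fun k => h ⟨k, rfl⟩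
  exact ⟨f, fun k l hkl => hc.lt_iff_lt.1 (by simpa only [hf] using ha hkl), funext hf⟩

/-- The data of an element of `AugShuffle`: the rows of the two factors are placed at the
positions `f` and `g` among `r` rows. -/
structure Riffle (p q : ℕ) where
  r : ℕ
  f : Fin p → Fin r
  g : Fin q → Fin r
  strictMono_f : StrictMono f
  strictMono_g : StrictMono g
  cover : ∀ i, i ∈ Set.range f ∨ i ∈ Set.range g

namespace Riffle

variable {p q : ℕ} {α : Type*}

lemma ext {σ τ : Riffle p q} (hr : σ.r = τ.r) (hf : ∀ k, (σ.f k : ℕ) = τ.f k)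
    (hg : ∀ k, (σ.g k : ℕ) = τ.g k) : σ = τ := by
  obtain ⟨r, f, g, _, _, _⟩ := σ
  obtain ⟨r', f', g', _, _, _⟩ := τ
  subst hr
  obtain rfl : f = f' := funext fun k => Fin.ext (hf k)
  obtain rfl : g = g' := funext fun k => Fin.ext (hg k)
  rfl

lemma r_le_add (σ : Riffle p q) : σ.r ≤ p + q := by
  have hsurj : Surjective (Sum.elim σ.f σ.g) := fun i => by
    rcases σ.cover i with ⟨k, rfl⟩ | ⟨k, rfl⟩
    exacts [⟨.inl k, rfl⟩, ⟨.inr k, rfl⟩]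
  simpa using Fintype.card_le_of_surjective _ hsurj

instance : Finite (Riffle p q) := by
  refine Finite.of_injective
    (β := Fin (p + q + 1) × (Fin p → Fin (p + q)) × (Fin q → Fin (p + q)))
    (fun σ => (⟨σ.r, Nat.lt_succ_of_le σ.r_le_add⟩, Fin.castLE σ.r_le_add ∘ σ.f,
      Fin.castLE σ.r_le_add ∘ σ.g)) fun σ τ h => ?_
  simp only [Prod.mk.injEq, funext_iff, comp_apply, Fin.ext_iff, Fin.val_castLE] at h
  exact ext h.1 h.2.1 h.2.2

instance : Fintype (Riffle p q) := Fintype.ofFinite _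

lemma range_comp_union (σ : Riffle p q) (c : Fin σ.r → α) :
    Set.range (c ∘ σ.f) ∪ Set.range (c ∘ σ.g) = Set.range c := by
  have hcover : Set.range σ.f ∪ Set.range σ.g = Set.univ := Set.eq_univ_of_forall σ.cover
  rw [Set.range_comp, Set.range_comp, ← Set.image_union, hcover, Set.image_univ]

variable [LinearOrder α]

variable (p q α) in
def restrict (x : Σ σ : Riffle p q, {c : Fin σ.r → α // StrictMono c}) :
    {a : Fin p → α // StrictMono a} × {b : Fin q → α // StrictMono b} :=
  (⟨x.2 ∘ x.1.f, x.2.2.comp x.1.strictMono_f⟩, ⟨x.2 ∘ x.1.g, x.2.2.comp x.1.strictMono_g⟩)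

lemma restrict_injective : Injective (restrict p q α) := by
  rintro ⟨⟨r, f, g, hf, hg, hfg⟩, c, hc⟩ ⟨⟨r', f', g', hf', hg', hfg'⟩, d, hd⟩ h
  simp only [restrict, Prod.mk.injEq, Subtype.mk.injEq] at h
  obtain ⟨hcf, hcg⟩ := h
  have hrange : Set.range c = Set.range d := by
    rw [← range_comp_union ⟨r, f, g, hf, hg, hfg⟩,
      ← range_comp_union ⟨r', f', g', hf', hg', hfg'⟩]
    exact congrArg₂ _ (congrArg _ hcf) (congrArg _ hcg)
  obtain rfl : r = r' := by
    have hcard := congrArg (fun s : Set α => Nat.card s) hrange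
    simp only [Nat.card_range_of_injective hc.injective,
      Nat.card_range_of_injective hd.injective, Nat.card_eq_fintype_card, Fintype.card_fin] at hcard
    exact hcard
  obtain rfl : c = d := (hc.range_inj hd).1 hrange
  obtain rfl : f = f' := hc.injective.comp_left hcf
  obtain rfl : g = g' := hc.injective.comp_left hcg
  rfl

lemma restrict_surjective : Surjective (restrict p q α) := by
  rintro ⟨⟨a, ha⟩, ⟨b, hb⟩⟩
  set C := Finset.univ.image a ∪ Finset.univ.image b
  have hC : Set.range (C.orderEmbOfFin rfl) = Set.range a ∪ Set.range b := by
    simp [C, Finset.range_orderEmbOfFin]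
  have hc := (C.orderEmbOfFin rfl).strictMono
  obtain ⟨f, hf, hcf⟩ := hc.exists_strictMono_comp_eq ha (hC ▸ Set.subset_union_left)
  obtain ⟨g, hg, hcg⟩ := hc.exists_strictMono_comp_eq hb (hC ▸ Set.subset_union_right)
  have hfg : ∀ i, i ∈ Set.range f ∨ i ∈ Set.range g := fun i => by
    have hi : C.orderEmbOfFin rfl i ∈ Set.range a ∪ Set.range b := hC ▸ Set.mem_range_self i
    rw [← hcf, ← hcg, Set.range_comp, Set.range_comp] at hi
    simpa only [Set.mem_union, hc.injective.mem_set_image] using hi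
  exact ⟨⟨⟨C.card, f, g, hf, hg, hfg⟩, _, hc⟩, by simp [restrict, hcf, hcg]⟩

end Riffle

lemma PackedMatrix.row_ne_zero (P : PackedMatrix) (i : Fin P.p) : P.entry i ≠ 0 := fun h => by
  obtain ⟨j, hj⟩ := P.rows_nonzero i
  exact hj (congrFun h j)

/-- `extend σ.f P.entry 0` is `P` with zero rows inserted off the range of `σ.f`. This is an
`abbrev` so that `Fin (shuffleMatrix P Q σ).p` and `Fin σ.r` are identified. -/
abbrev shuffleMatrix (P Q : PackedMatrix) (σ : Riffle P.p Q.p) : PackedMatrix where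
  p := σ.r
  q := P.q + Q.q
  entry i := Fin.append (extend σ.f P.entry 0 i) (extend σ.g Q.entry 0 i)
  rows_nonzero i := by
    rcases σ.cover i with ⟨k, rfl⟩ | ⟨k, rfl⟩
    · obtain ⟨j, hj⟩ := P.rows_nonzero k
      exact ⟨Fin.castAdd Q.q j, by simpa [σ.strictMono_f.injective.extend_apply] using hj⟩
    · obtain ⟨j, hj⟩ := Q.rows_nonzero k
      exact ⟨Fin.natAdd P.q j, by simpa [σ.strictMono_g.injective.extend_apply] using hj⟩
  cols_nonzero := Fin.addCases
    (fun j => by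
      obtain ⟨k, hk⟩ := P.cols_nonzero j
      exact ⟨σ.f k, by simpa [σ.strictMono_f.injective.extend_apply] using hk⟩)
    (fun j => by
      obtain ⟨k, hk⟩ := Q.cols_nonzero j
      exact ⟨σ.g k, by simpa [σ.strictMono_g.injective.extend_apply] using hk⟩)

lemma shuffleMatrix_injective (P Q : PackedMatrix) : Injective (shuffleMatrix P Q) := by
  rintro ⟨r, f, g, hf, hg, hfg⟩ ⟨r', f', g', hf', hg', hfg'⟩ hE
  obtain rfl : r = r' := congrArg PackedMatrix.p hE
  simp only [shuffleMatrix, PackedMatrix.mk.injEq, heq_eq_eq, true_and] at hE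
  have hleft : extend f P.entry 0 = extend f' P.entry 0 := funext₂ fun i j => by
    simpa using congrFun (congrFun hE i) (Fin.castAdd Q.q j)
  have hright : extend g Q.entry 0 = extend g' Q.entry 0 := funext₂ fun i j => by
    simpa using congrFun (congrFun hE i) (Fin.natAdd P.q j)
  obtain rfl : f = f' := (hf.range_inj hf').1 <| by
    rw [hf.injective.range_eq_support_extend P.row_ne_zero,
      hf'.injective.range_eq_support_extend P.row_ne_zero, hleft]
  obtain rfl : g = g' := (hg.range_inj hg').1 <| by
    rw [hg.injective.range_eq_support_extend Q.row_ne_zero,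
      hg'.injective.range_eq_support_extend Q.row_ne_zero, hright]
  rfl

lemma shuffleMatrix_mem_augShuffle (P Q : PackedMatrix) (σ : Riffle P.p Q.p) :
    shuffleMatrix P Q σ ∈ AugShuffle P Q := by
  refine ⟨rfl, σ.f, σ.g, σ.strictMono_f, σ.strictMono_g, σ.cover, fun k j => ?_,
    fun i hi j => ?_, fun k j => ?_, fun i hi j => ?_⟩
  · exact (Fin.append_left _ _ j).trans
      (congrFun (σ.strictMono_f.injective.extend_apply P.entry 0 k) j)
  · exact (Fin.append_left _ _ j).trans
      (congrFun (extend_apply' (f := σ.f) P.entry 0 i hi) j)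
  · exact (Fin.append_right _ _ j).trans
      (congrFun (σ.strictMono_g.injective.extend_apply Q.entry 0 k) j)
  · exact (Fin.append_right _ _ j).trans
      (congrFun (extend_apply' (f := σ.g) Q.entry 0 i hi) j)

lemma exists_shuffleMatrix_eq {P Q R : PackedMatrix} (hR : R ∈ AugShuffle P Q) :
    ∃ σ : Riffle P.p Q.p, shuffleMatrix P Q σ = R := by
  obtain ⟨p, q, entry, _, _⟩ := R
  obtain ⟨h, f, g, hf, hg, hfg, hP, hP0, hQ, hQ0⟩ := hR
  change q = P.q + Q.q at h
  subst h
  refine ⟨⟨p, f, g, hf, hg, hfg⟩, ?_⟩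
  simp only [shuffleMatrix, PackedMatrix.mk.injEq, heq_eq_eq, true_and]
  funext i j
  refine Fin.addCases (fun j => ?_) (fun j => ?_) j
  · by_cases hi : i ∈ Set.range f
    · obtain ⟨k, rfl⟩ := hi
      simpa [hf.injective.extend_apply] using (hP k j).symm
    · simpa [extend_apply' _ _ _ hi] using (hP0 i hi j).symm
  · by_cases hi : i ∈ Set.range g
    · obtain ⟨k, rfl⟩ := hi
      simpa [hg.injective.extend_apply] using (hQ k j).symm
    · simpa [extend_apply' _ _ _ hi] using (hQ0 i hi j).symm

lemma range_shuffleMatrix (P Q : PackedMatrix) :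
    Set.range (shuffleMatrix P Q) = AugShuffle P Q :=
  Set.ext fun _ =>
    ⟨fun ⟨σ, hσ⟩ => hσ ▸ shuffleMatrix_mem_augShuffle P Q σ, exists_shuffleMatrix_eq⟩

section Monomials

variable (N : ℕ) {P Q : PackedMatrix} (σ : Riffle P.p Q.p) (c : Fin σ.r → Fin N)

lemma colMonomial_shuffleMatrix_castAdd (j : Fin P.q) :
    colMonomial N (shuffleMatrix P Q σ) c (Fin.castAdd Q.q j) = colMonomial N P (c ∘ σ.f) j :=
  Subtype.ext <| by
    simp only [colMonomial, Fin.append_left, comp_apply]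
    exact σ.strictMono_f.injective.prod_extend_zero P.entry
      (fun i e => (MvPolynomial.X (c i) : MvPolynomial (Fin N) ℚ) ^ e j) fun _ => pow_zero _

lemma colMonomial_shuffleMatrix_natAdd (j : Fin Q.q) :
    colMonomial N (shuffleMatrix P Q σ) c (Fin.natAdd P.q j) = colMonomial N Q (c ∘ σ.g) j :=
  Subtype.ext <| by
    simp only [colMonomial, Fin.append_right, comp_apply]
    exact σ.strictMono_g.injective.prod_extend_zero Q.entry
      (fun i e => (MvPolynomial.X (c i) : MvPolynomial (Fin N) ℚ) ^ e j) fun _ => pow_zero _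

lemma dotMonomial_shuffleMatrix :
    dotMonomial N (shuffleMatrix P Q σ) c =
      dotMonomial N P (c ∘ σ.f) * dotMonomial N Q (c ∘ σ.g) := by
  unfold dotMonomial
  rw [List.ofFn_add, List.prod_append]
  congr 3 <;> funext j
  exacts [congrArg _ (colMonomial_shuffleMatrix_castAdd N σ c j),
    congrArg _ (colMonomial_shuffleMatrix_natAdd N σ c j)]

end Monomials

lemma MS_eq_sum_strictMono (N : ℕ) (P : PackedMatrix) :
    MS N P = ∑ a : {a : Fin P.p → Fin N // StrictMono a}, dotMonomial N P a :=
  Finset.sum_subtype _ (by simp) _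

lemma MS_mul_eq_sum_shuffleMatrix (N : ℕ) (P Q : PackedMatrix) :
    MS N P * MS N Q = ∑ σ : Riffle P.p Q.p, MS N (shuffleMatrix P Q σ) := calc
  MS N P * MS N Q = ∑ ab : {a : Fin P.p → Fin N // StrictMono a} ×
      {b : Fin Q.p → Fin N // StrictMono b}, dotMonomial N P ab.1 * dotMonomial N Q ab.2 := by
    rw [MS_eq_sum_strictMono, MS_eq_sum_strictMono, Finset.sum_mul_sum]
    exact (Fintype.sum_prod_type' _).symm
  _ = ∑ x : Σ σ : Riffle P.p Q.p, {c : Fin σ.r → Fin N // StrictMono c},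
      dotMonomial N (shuffleMatrix P Q x.1) x.2 := by
    exact (Fintype.sum_bijective _ ⟨Riffle.restrict_injective, Riffle.restrict_surjective⟩ _ _
      fun x => dotMonomial_shuffleMatrix N x.1 x.2).symm
  _ = ∑ σ : Riffle P.p Q.p, MS N (shuffleMatrix P Q σ) := by
    simp only [MS_eq_sum_strictMono, Fintype.sum_sigma]

theorem MS_mul_general (N : ℕ) :
    (∀ P Q : PackedMatrix, MS N P * MS N Q = ∑ᶠ R ∈ AugShuffle P Q, MS N R) ∧
    (∀ x y : QX N,
      x ∈ Submodule.span ℚ (Set.range (MS N)) →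
      y ∈ Submodule.span ℚ (Set.range (MS N)) →
      x * y ∈ Submodule.span ℚ (Set.range (MS N))) := by
  refine ⟨fun P Q => ?_, fun x y hx hy => ?_⟩
  · rw [← range_shuffleMatrix, finsum_mem_range (shuffleMatrix_injective P Q),
      finsum_eq_sum_of_fintype, MS_mul_eq_sum_shuffleMatrix]
  · have hgen :
        Set.range (MS N) * Set.range (MS N) ⊆ Submodule.span ℚ (Set.range (MS N)) := by
      rintro _ ⟨_, ⟨P, rfl⟩, _, ⟨Q, rfl⟩, rfl⟩
      change MS N P * MS N Q ∈ _
      rw [MS_mul_eq_sum_shuffleMatrix]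
      exact Submodule.sum_mem _ fun σ _ => Submodule.subset_span ⟨_, rfl⟩
    have hxy := Submodule.mul_mem_mul hx hy
    rw [Submodule.span_mul_span] at hxy
    exact Submodule.span_le.2 hgen hxy

/-- `MS_P · MS_Q = Σ_{R ∈ ⧢(P,Q)} MS_R` in `ℚ{X}`; in particular the
linear span of the `MS_M` is a subalgebra of `ℚ{X}`. -/
theorem MS_mul (N : ℕ) (hN : 1 ≤ N) :
    (∀ P Q : PackedMatrix, MS N P * MS N Q = ∑ᶠ R ∈ AugShuffle P Q, MS N R) ∧
    (∀ x y : QX N,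
      x ∈ Submodule.span ℚ (Set.range (MS N)) →
      y ∈ Submodule.span ℚ (Set.range (MS N)) →
      x * y ∈ Submodule.span ℚ (Set.range (MS N))) :=
  MS_mul_general N

end
end

section
/- Let I and J be compositions and N ≥ 1. Then in the tensor algebra ℚ{X}: (Σ_{P packed, Col(P)=I} MS_P) · (Σ_{Q packed, Col(Q)=J} MS_Q) = Σ_{R packed, Col(R)=I·J} MS_R, where I·J denotes the concatenation of the compositions I and J and the sums are over all packed matrices with the indicated composition of column sums. (This says that S^I ↦ Σ_{Col(P)=I} MS_P defines an algebra homomorphism embedding the noncommutative symmetric functions into MQSym.) -/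
open scoped Classical

noncomputable section

/-- The composition of column sums of a packed matrix, as a list. -/
def colComp (P : PackedMatrix) : List ℕ :=
  List.ofFn fun j : Fin P.q => ∑ i, P.entry i j

/-!
A packed matrix `P` together with variables `a₁ < ⋯ < a_p` is the same datum as an `X × q`
matrix with no zero column: insert zero rows at the variables not chosen, or delete the zero
rows. Hence `Σ_{Col(P) = (c₁,…,c_q)} MS_P` is the sum of `m₁ ⊗ ⋯ ⊗ m_q` over all such matrices
with column sums `cⱼ`, and by multilinearity of the tensor product this is `h_{c₁} ⊗ ⋯ ⊗ h_{c_q}`,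
where `h_n` is the complete homogeneous symmetric polynomial (projected to `ℚ[X]⁺`, which kills
`h₀ = 1`). The product formula is then concatenation of tensors.
-/

open Finset MvPolynomial

theorem MvPolynomial.hsymm_eq_sum_piAntidiag {σ R : Type*} [Fintype σ] [DecidableEq σ]
    [CommSemiring R] (n : ℕ) :
    hsymm σ R n = ∑ m ∈ univ.piAntidiag n, ∏ x, X x ^ m x := by
  let _ : Fintype {m : σ → ℕ // ∑ x, m x = n} := .subtype (univ.piAntidiag n) (by simp)
  rw [hsymm, sum_subtype _ (p := fun m : σ → ℕ => ∑ x, m x = n) (by simp),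
    ← (Sym.equivNatSumOfFintype σ n).sum_comp]
  refine Fintype.sum_congr _ _ fun s => ?_
  rw [prod_multiset_map_count]
  exact prod_subset (subset_univ _) fun x _ hx => by simp_all

def toPolyPlus (N : ℕ) : MvPolynomial (Fin N) ℚ →ₗ[ℚ] PolyPlus N :=
  (LinearMap.id - Algebra.linearMap ℚ _ ∘ₗ lcoeff ℚ 0).codRestrict _ fun p => by
    simp [PolyPlus, constantCoeff_eq]

theorem coe_toPolyPlus {N : ℕ} (p : MvPolynomial (Fin N) ℚ) :
    (toPolyPlus N p : MvPolynomial (Fin N) ℚ) = p - C (constantCoeff p) :=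
  rfl

theorem toPolyPlus_one (N : ℕ) : toPolyPlus N 1 = 0 :=
  Subtype.ext (by simp [coe_toPolyPlus])

theorem coe_toPolyPlus_of_constantCoeff_eq_zero {N : ℕ} {p : MvPolynomial (Fin N) ℚ}
    (hp : constantCoeff p = 0) : (toPolyPlus N p : MvPolynomial (Fin N) ℚ) = p := by
  simp [coe_toPolyPlus, hp]

theorem colComp_eq_ofFn_iff {P : PackedMatrix} {q : ℕ} {c : Fin q → ℕ} :
    colComp P = List.ofFn c ↔ ∃ h : P.q = q, ∀ j, ∑ i, P.entry i j = c (Fin.cast h j) := by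
  simp only [colComp, List.ofFn_inj', Fin.sigma_eq_iff_eq_comp_cast, funext_iff,
    Function.comp_apply]

theorem PackedMatrix.p_le_sum_colComp (P : PackedMatrix) : P.p ≤ (colComp P).sum :=
  calc P.p = ∑ _i : Fin P.p, 1 := by simp
    _ ≤ ∑ i, ∑ j, P.entry i j := sum_le_sum fun i _ => by
      obtain ⟨j, hj⟩ := P.rows_nonzero i
      exact (Nat.one_le_iff_ne_zero.2 hj).trans
        (single_le_sum (fun _ _ => Nat.zero_le _) (mem_univ j))
    _ = (colComp P).sum := by rw [colComp, List.sum_ofFn, sum_comm]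

theorem PackedMatrix.sigma_ext {σ : Type*} {P P' : PackedMatrix} {a : Fin P.p → σ}
    {a' : Fin P'.p → σ} (hp : P.p = P'.p) (hq : P.q = P'.q)
    (he : ∀ i j, P.entry i j = P'.entry (Fin.cast hp i) (Fin.cast hq j))
    (ha : ∀ i, a i = a' (Fin.cast hp i)) :
    (⟨P, a⟩ : Σ P : PackedMatrix, Fin P.p → σ) = ⟨P', a'⟩ := by
  obtain ⟨p, q, e, _, _⟩ := P
  obtain ⟨p', q', e', _, _⟩ := P'
  dsimp only at hp hq he ha ⊢
  subst hp hq
  obtain rfl : e = e' := funext₂ he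
  obtain rfl : a = a' := funext ha
  rfl

section Matrices

variable {σ : Type*}

/-! Matrices with rows indexed by `σ` are stored by columns: `M j : σ → ℕ` is column `j`. -/

def rowSupport [Fintype σ] {q : ℕ} (M : Fin q → σ → ℕ) : Finset σ := {x | ∃ j, M j x ≠ 0}

@[simp]
theorem mem_rowSupport [Fintype σ] {q : ℕ} {M : Fin q → σ → ℕ} {x : σ} :
    x ∈ rowSupport M ↔ ∃ j, M j x ≠ 0 := by
  simp [rowSupport]

def matricesWithColSums (σ : Type*) [Fintype σ] [DecidableEq σ] {q : ℕ} (c : Fin q → ℕ) :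
    Finset (Fin q → σ → ℕ) :=
  {M ∈ Fintype.piFinset fun j => univ.piAntidiag (c j) | ∀ j, M j ≠ 0}

theorem mem_matricesWithColSums [Fintype σ] [DecidableEq σ] {q : ℕ} {c : Fin q → ℕ}
    {M : Fin q → σ → ℕ} :
    M ∈ matricesWithColSums σ c ↔ (∀ j, ∑ x, M j x = c j) ∧ ∀ j, M j ≠ 0 := by
  simp [matricesWithColSums]

namespace PackedMatrix

def spread (P : PackedMatrix) (a : Fin P.p → σ) {q : ℕ} (h : P.q = q) : Fin q → σ → ℕ :=
  fun j => Function.extend a (P.entry · (Fin.cast h.symm j)) 0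

variable {P : PackedMatrix} {a : Fin P.p → σ} {q : ℕ} (h : P.q = q)

theorem spread_apply (ha : Function.Injective a) (i : Fin P.p) (j : Fin q) :
    P.spread a h j (a i) = P.entry i (Fin.cast h.symm j) :=
  ha.extend_apply _ _ _

theorem spread_apply_of_notMem_range {x : σ} (hx : x ∉ Set.range a) (j : Fin q) :
    P.spread a h j x = 0 :=
  Function.extend_apply' _ _ _ hx

theorem spread_ne_zero (ha : Function.Injective a) (j : Fin q) : P.spread a h j ≠ 0 := by
  obtain ⟨i, hi⟩ := P.cols_nonzero (Fin.cast h.symm j)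
  exact Function.ne_iff.2 ⟨a i, by rwa [spread_apply h ha]⟩

variable [Fintype σ]

theorem prod_pow_spread {M : Type*} [CommMonoid M] (ha : Function.Injective a) (f : σ → M)
    (j : Fin q) : ∏ x, f x ^ P.spread a h j x = ∏ i, f (a i) ^ P.entry i (Fin.cast h.symm j) :=
  (Fintype.prod_of_injective a ha _ _
    (fun _ hx => by rw [spread_apply_of_notMem_range h hx, pow_zero])
    fun i => by rw [spread_apply h ha]).symm

theorem sum_spread (ha : Function.Injective a) (j : Fin q) :
    ∑ x, P.spread a h j x = ∑ i, P.entry i (Fin.cast h.symm j) :=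
  (Fintype.sum_of_injective a ha _ _ (fun _ hx => spread_apply_of_notMem_range h hx j)
    fun i => (spread_apply h ha i j).symm).symm

variable [DecidableEq σ]

theorem rowSupport_spread (ha : Function.Injective a) :
    rowSupport (P.spread a h) = univ.image a := by
  ext x
  by_cases hx : x ∈ Set.range a
  · obtain ⟨i, rfl⟩ := hx
    obtain ⟨j, hj⟩ := P.rows_nonzero i
    simp only [mem_rowSupport, mem_image_of_mem a (mem_univ i), iff_true]
    exact ⟨Fin.cast h j, by rwa [spread_apply h ha]⟩
  · simp only [mem_rowSupport, spread_apply_of_notMem_range h hx, ne_eq, not_true_eq_false,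
      exists_false, false_iff]
    simpa using hx

theorem spread_mem_matricesWithColSums {c : Fin q → ℕ}
    (hc : ∀ j, ∑ i, P.entry i j = c (Fin.cast h j)) (ha : Function.Injective a) :
    P.spread a h ∈ matricesWithColSums σ c :=
  mem_matricesWithColSums.2
    ⟨fun j => by rw [sum_spread h ha, hc, Fin.cast_cast, Fin.cast_eq_self], spread_ne_zero h ha⟩

end PackedMatrix

section Pack

variable [Fintype σ] [LinearOrder σ] {q : ℕ}

abbrev rowEmbedding (M : Fin q → σ → ℕ) : Fin #(rowSupport M) ↪o σ :=
  (rowSupport M).orderEmbOfFin rfl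

theorem mem_range_rowEmbedding {M : Fin q → σ → ℕ} {x : σ} :
    x ∈ Set.range (rowEmbedding M) ↔ ∃ j, M j x ≠ 0 := by
  rw [range_orderEmbOfFin, mem_coe, mem_rowSupport]

theorem apply_eq_zero_of_notMem_range_rowEmbedding {M : Fin q → σ → ℕ} {x : σ}
    (hx : x ∉ Set.range (rowEmbedding M)) (j : Fin q) : M j x = 0 := by
  by_contra hne
  exact hx (mem_range_rowEmbedding.2 ⟨j, hne⟩)

def PackedMatrix.pack (M : Fin q → σ → ℕ) (hM : ∀ j, M j ≠ 0) : PackedMatrix where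
  p := #(rowSupport M)
  q := q
  entry i j := M j (rowEmbedding M i)
  rows_nonzero i := mem_range_rowEmbedding.1 ⟨i, rfl⟩
  cols_nonzero j := by
    obtain ⟨x, hx⟩ := Function.ne_iff.1 (hM j)
    obtain ⟨i, rfl⟩ := mem_range_rowEmbedding.2 ⟨j, hx⟩
    exact ⟨i, hx⟩

namespace PackedMatrix

variable {M : Fin q → σ → ℕ} (hM : ∀ j, M j ≠ 0)

theorem sum_pack_entry (j : Fin q) : ∑ i, (pack M hM).entry i j = ∑ x, M j x :=
  Fintype.sum_of_injective _ (rowEmbedding M).injective _ _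
    (fun _ hx => apply_eq_zero_of_notMem_range_rowEmbedding hx j) fun _ => rfl

theorem colComp_pack {c : Fin q → ℕ} (hc : ∀ j, ∑ x, M j x = c j) :
    colComp (pack M hM) = List.ofFn c :=
  colComp_eq_ofFn_iff.2 ⟨rfl, fun j => (sum_pack_entry hM j).trans (hc j)⟩

theorem spread_pack : (pack M hM).spread (rowEmbedding M) rfl = M := by
  funext j x
  by_cases hx : x ∈ Set.range (rowEmbedding M)
  · obtain ⟨i, rfl⟩ := hx
    exact spread_apply rfl (rowEmbedding M).injective i j
  · exact (spread_apply_of_notMem_range (P := pack M hM) rfl hx j).trans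
      (apply_eq_zero_of_notMem_range_rowEmbedding hx j).symm

theorem pack_spread {P : PackedMatrix} {a : Fin P.p → σ} (h : P.q = q) (ha : StrictMono a) :
    (⟨pack (P.spread a h) (spread_ne_zero h ha.injective), rowEmbedding _⟩ :
      Σ P : PackedMatrix, Fin P.p → σ) = ⟨P, a⟩ := by
  have hsupp := rowSupport_spread h ha.injective
  have hcard : #(rowSupport (P.spread a h)) = P.p := by
    rw [hsupp, card_image_of_injective _ ha.injective, card_univ, Fintype.card_fin]
  have hmem (i) : (a ∘ Fin.cast hcard) i ∈ rowSupport (P.spread a h) :=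
    (Finset.ext_iff.1 hsupp _).2 (mem_image_of_mem a (mem_univ _))
  have hemb : ∀ i, rowEmbedding (P.spread a h) i = a (Fin.cast hcard i) :=
    congrFun (orderEmbOfFin_unique rfl hmem (ha.comp (Fin.cast_strictMono hcard))).symm
  refine sigma_ext hcard h.symm (fun i (j : Fin q) => ?_) hemb
  exact (congrArg (P.spread a h j) (hemb i)).trans (spread_apply h ha.injective _ _)

/-- `G` is indexed by the number of columns because `P.q` equals `q` only propositionally. -/
theorem sum_sum_strictMono_eq_sum_matricesWithColSums {R : Type*} [AddCommMonoid R]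
    (c : Fin q → ℕ) (S : Finset PackedMatrix) (hS : ∀ P, P ∈ S ↔ colComp P = List.ofFn c)
    (G : ∀ n, (Fin n → σ → ℕ) → R) :
    ∑ P ∈ S, ∑ a ∈ univ.filter (fun a : Fin P.p → σ => StrictMono a), G P.q (P.spread a rfl) =
      ∑ M ∈ matricesWithColSums σ c, G q M := by
  have hq (z) (hz : z ∈ S.sigma fun P => univ.filter fun a : Fin P.p → σ => StrictMono a) :=
    colComp_eq_ofFn_iff.1 ((hS _).1 (mem_sigma.1 hz).1)
  have hmono (z) (hz : z ∈ S.sigma fun P => univ.filter fun a : Fin P.p → σ => StrictMono a) :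
      StrictMono z.2 :=
    (mem_filter.1 (mem_sigma.1 hz).2).2
  rw [sum_sigma']
  refine sum_bij' (fun z hz => z.1.spread z.2 (hq z hz).1)
    (fun M hM => ⟨pack M (mem_matricesWithColSums.1 hM).2, rowEmbedding M⟩) ?_ ?_ ?_ ?_ ?_
  · exact fun z hz => spread_mem_matricesWithColSums _ (hq z hz).2 (hmono z hz).injective
  · exact fun M hM => mem_sigma.2
      ⟨(hS _).2 (colComp_pack (mem_matricesWithColSums.1 hM).2 (mem_matricesWithColSums.1 hM).1),
        mem_filter.2 ⟨mem_univ _, (rowEmbedding M).strictMono⟩⟩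
  · exact fun z hz => pack_spread _ (hmono z hz)
  · exact fun M hM => spread_pack (mem_matricesWithColSums.1 hM).2
  · rintro ⟨P, a⟩ hz
    obtain ⟨h, -⟩ := hq _ hz
    dsimp only
    subst h
    rfl

end PackedMatrix

end Pack

end Matrices

theorem finite_setOf_colComp_eq (I : List ℕ) : {P : PackedMatrix | colComp P = I}.Finite := by
  obtain ⟨q, c, rfl⟩ : ∃ q, ∃ c : Fin q → ℕ, I = List.ofFn c := ⟨_, _, (List.ofFn_get I).symm⟩
  refine (Set.finite_range fun M : matricesWithColSums (Fin (List.ofFn c).sum) c =>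
    PackedMatrix.pack M.1 (mem_matricesWithColSums.1 M.2).2).subset fun P hP => ?_
  obtain ⟨h, hc⟩ := colComp_eq_ofFn_iff.1 hP
  have ha : StrictMono (Fin.castLE (hP ▸ P.p_le_sum_colComp)) := Fin.strictMono_castLE _
  exact ⟨⟨_, P.spread_mem_matricesWithColSums h hc ha.injective⟩,
    congrArg Sigma.fst (PackedMatrix.pack_spread h ha)⟩

def tensorMonomial (N : ℕ) {n : ℕ} (M : Fin n → Fin N → ℕ) : QX N :=
  TensorAlgebra.tprod ℚ (PolyPlus N) n fun j => toPolyPlus N (∏ x, X x ^ M j x)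

theorem dotMonomial_eq_tensorMonomial (N : ℕ) (P : PackedMatrix) {a : Fin P.p → Fin N}
    (ha : Function.Injective a) : dotMonomial N P a = tensorMonomial N (P.spread a rfl) := by
  rw [dotMonomial, tensorMonomial, TensorAlgebra.tprod_apply]
  congr
  funext j
  have hprod := P.prod_pow_spread rfl ha (X (R := ℚ)) j
  refine congrArg _ (Subtype.ext ?_)
  rw [coe_toPolyPlus_of_constantCoeff_eq_zero, hprod]
  · rfl
  · exact hprod ▸ (colMonomial N P a j).2

theorem finsum_MS_eq_sum_matricesWithColSums (N : ℕ) {q : ℕ} (c : Fin q → ℕ) :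
    ∑ᶠ P ∈ {P | colComp P = List.ofFn c}, MS N P =
      ∑ M ∈ matricesWithColSums (Fin N) c, tensorMonomial N M := by
  have hfin := finite_setOf_colComp_eq (List.ofFn c)
  rw [finsum_mem_eq_finite_toFinset_sum _ hfin,
    ← PackedMatrix.sum_sum_strictMono_eq_sum_matricesWithColSums c _
      (fun _ => hfin.mem_toFinset) fun _ => tensorMonomial N]
  exact sum_congr rfl fun P _ => sum_congr rfl fun a ha =>
    dotMonomial_eq_tensorMonomial N P (mem_filter.1 ha).2.injective

theorem tprod_hsymm_eq_sum_matricesWithColSums (N : ℕ) {q : ℕ} (c : Fin q → ℕ) :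
    TensorAlgebra.tprod ℚ (PolyPlus N) q (fun j => toPolyPlus N (hsymm (Fin N) ℚ (c j))) =
      ∑ M ∈ matricesWithColSums (Fin N) c, tensorMonomial N M := by
  simp only [hsymm_eq_sum_piAntidiag, map_sum]
  rw [MultilinearMap.map_sum_finset, matricesWithColSums, sum_filter]
  refine sum_congr rfl fun M _ => ?_
  split_ifs with hM
  · rfl
  · obtain ⟨j, hj⟩ := not_forall_not.1 hM
    exact MultilinearMap.map_coord_zero _ j (by simp [hj, toPolyPlus_one])

theorem finsum_MS_colComp_eq_prod_hsymm (N : ℕ) (I : List ℕ) :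
    ∑ᶠ P ∈ {P | colComp P = I}, MS N P =
      (I.map fun n => TensorAlgebra.ι ℚ (toPolyPlus N (hsymm (Fin N) ℚ n))).prod := by
  obtain ⟨q, c, rfl⟩ : ∃ q, ∃ c : Fin q → ℕ, I = List.ofFn c := ⟨_, _, (List.ofFn_get I).symm⟩
  rw [finsum_MS_eq_sum_matricesWithColSums, ← tprod_hsymm_eq_sum_matricesWithColSums,
    TensorAlgebra.tprod_apply, List.map_ofFn]
  rfl

theorem MS_col_mul_general (N : ℕ) (I J : List ℕ) :
    (∑ᶠ P ∈ {P : PackedMatrix | colComp P = I}, MS N P) *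
      (∑ᶠ Q ∈ {Q : PackedMatrix | colComp Q = J}, MS N Q) =
    ∑ᶠ R ∈ {R : PackedMatrix | colComp R = I ++ J}, MS N R := by
  simp only [finsum_MS_colComp_eq_prod_hsymm, List.map_append, List.prod_append]

/-- For compositions `I, J`,
`(Σ_{Col(P)=I} MS_P)·(Σ_{Col(Q)=J} MS_Q) = Σ_{Col(R)=I·J} MS_R` in `ℚ{X}`: the map
`S^I ↦ Σ_{Col(P)=I} MS_P` embeds noncommutative symmetric functions into `MQSym`. -/
theorem MS_col_mul (N : ℕ) (hN : 1 ≤ N) (I J : List ℕ)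
    (hI : ∀ x ∈ I, 0 < x) (hJ : ∀ x ∈ J, 0 < x) :
    (∑ᶠ P ∈ {P : PackedMatrix | colComp P = I}, MS N P) *
      (∑ᶠ Q ∈ {Q : PackedMatrix | colComp Q = J}, MS N Q) =
    ∑ᶠ R ∈ {R : PackedMatrix | colComp R = I ++ J}, MS N R :=
  MS_col_mul_general N I J

end
end
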